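/- arXiv:2110.08543 — 5 statements merged into one kernel-verified Lean document; each statement's English description precedes it below -/
import Mathlib

section
/- Let Y = ℂ, R a complex normed space, X = R × R*, W₁ ⊂ R, W₂ ⊂ R*, and let A be the duality pairing A(x,y) = ⟨y, x⟩ for x ∈ R, y ∈ R*. Suppose there exist x̃₁ ∈ W₁ and x̃₂ ∈ W₂ such that either (−x̃₁ ∈ W₁ and θ_Z ∈ I(x̃₁, x̃₂) ∩ I(−x̃₁, x̃₂)), or (−x̃₂ ∈ W₂ and θ_Z ∈ I(x̃₁, x̃₂) ∩ I(x̃₁, −x̃₂)). Then E(A, W₁ × W₂, I) ≥ |⟨x̃₂, x̃₁⟩|. -/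
open scoped ENNReal NNReal

/-!
If two elements of the class carry the same information `z` but have opposite values `v` and `-v`
of the operator, then any recovery method `Φ` errs by at least `max ‖v - Φ z‖ ‖-v - Φ z‖ ≥ ‖v‖`
at one of them. For the duality pairing, `(-x̃₁, x̃₂)` and `(x̃₁, -x̃₂)` both take the value
`-⟨x̃₂, x̃₁⟩`.
-/

theorem norm_le_max_norm_sub_norm_add {E : Type*} [SeminormedAddCommGroup E] [NormedSpace ℝ E]
    (a b : E) : ‖a‖ ≤ max ‖a - b‖ ‖a + b‖ := by
  have h : 2 * ‖a‖ ≤ ‖a - b‖ + ‖a + b‖ :=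
    calc 2 * ‖a‖ = ‖(2 : ℝ) • a‖ := by rw [norm_smul, Real.norm_two]
      _ = ‖(a - b) + (a + b)‖ := by rw [two_smul, sub_add_add_cancel]
      _ ≤ ‖a - b‖ + ‖a + b‖ := norm_add_le _ _
  linarith [le_max_left ‖a - b‖ ‖a + b‖, le_max_right ‖a - b‖ ‖a + b‖]

section OptimalRecovery

variable {X Z E : Type*} [SeminormedAddCommGroup E]

noncomputable def recoveryError (A : X → E) (W : Set X) (I : X → Set Z) (Φ : Z → E) : ℝ≥0∞ :=
  ⨆ x ∈ W, ⨆ z ∈ I x, (‖A x - Φ z‖₊ : ℝ≥0∞)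

noncomputable def optimalRecoveryError (A : X → E) (W : Set X) (I : X → Set Z) : ℝ≥0∞ :=
  ⨅ Φ : Z → E, recoveryError A W I Φ

theorem nnnorm_sub_le_recoveryError {A : X → E} {W : Set X} {I : X → Set Z}
    {x : X} (hx : x ∈ W) {z : Z} (hz : z ∈ I x) (Φ : Z → E) :
    (‖A x - Φ z‖₊ : ℝ≥0∞) ≤ recoveryError A W I Φ :=
  le_iSup₂_of_le x hx <| le_iSup₂_of_le z hz le_rfl

theorem nnnorm_le_optimalRecoveryError_of_eq_neg [NormedSpace ℝ E] {A : X → E} {W : Set X}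
    {I : X → Set Z} {x x' : X} (hx : x ∈ W) (hx' : x' ∈ W) (hA : A x' = -A x) {z : Z}
    (hz : z ∈ I x) (hz' : z ∈ I x') :
    (‖A x‖₊ : ℝ≥0∞) ≤ optimalRecoveryError A W I := by
  refine le_iInf fun Φ => ?_
  have hmax : ‖A x‖₊ ≤ max ‖A x - Φ z‖₊ ‖A x' - Φ z‖₊ := by
    rw [hA, ← neg_add', nnnorm_neg]
    exact norm_le_max_norm_sub_norm_add (A x) (Φ z)
  calc (‖A x‖₊ : ℝ≥0∞) ≤ max (‖A x - Φ z‖₊ : ℝ≥0∞) ‖A x' - Φ z‖₊ := by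
        exact_mod_cast hmax
    _ ≤ _ := max_le (nnnorm_sub_le_recoveryError hx hz Φ)
        (nnnorm_sub_le_recoveryError hx' hz' Φ)

theorem optimalRecoveryError_prod {R S : Type*} (A : R × S → E)
    (W₁ : Set R) (W₂ : Set S) (I : R × S → Set Z) :
    optimalRecoveryError A (W₁ ×ˢ W₂) I =
      ⨅ Φ : Z → E, ⨆ x ∈ W₁, ⨆ y ∈ W₂, ⨆ z ∈ I (x, y), (‖A (x, y) - Φ z‖₊ : ℝ≥0∞) :=
  iInf_congr fun _ => biSup_prod

end OptimalRecovery

theorem optimal_recovery_lower_estimate_scalar_product_general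
    {R Z : Type*} [NormedAddCommGroup R] [NormedSpace ℂ R]
    [AddCommGroup Z]
    (W₁ : Set R) (W₂ : Set (StrongDual ℂ R))
    (I : R × StrongDual ℂ R → Set Z)
    (x₁ : R) (x₂ : StrongDual ℂ R) (hx₁ : x₁ ∈ W₁) (hx₂ : x₂ ∈ W₂)
    (hcase :
      (-x₁ ∈ W₁ ∧ (0 : Z) ∈ I (x₁, x₂) ∧ (0 : Z) ∈ I (-x₁, x₂)) ∨
      (-x₂ ∈ W₂ ∧ (0 : Z) ∈ I (x₁, x₂) ∧ (0 : Z) ∈ I (x₁, -x₂))) :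
    (⨅ Φ : Z → ℂ, ⨆ x ∈ W₁, ⨆ y ∈ W₂, ⨆ z ∈ I (x, y), (‖y x - Φ z‖₊ : ℝ≥0∞)) ≥
      (‖x₂ x₁‖₊ : ℝ≥0∞) := by
  rw [← optimalRecoveryError_prod (fun p : R × StrongDual ℂ R => p.2 p.1)]
  rcases hcase with ⟨hW₁, h₀, h₀'⟩ | ⟨hW₂, h₀, h₀'⟩
  · exact nnnorm_le_optimalRecoveryError_of_eq_neg (x := (x₁, x₂)) (x' := (-x₁, x₂))
      ⟨hx₁, hx₂⟩ ⟨hW₁, hx₂⟩ (map_neg x₂ x₁) h₀ h₀'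
  · exact nnnorm_le_optimalRecoveryError_of_eq_neg (x := (x₁, x₂)) (x' := (x₁, -x₂))
      ⟨hx₁, hx₂⟩ ⟨hx₁, hW₂⟩ rfl h₀ h₀'

/-- Lower estimate for optimal recovery of the duality pairing
`A(x,y) = ⟨y,x⟩ = y x` on `W₁ × W₂ ⊆ R × R*`.  If `x̃₁ ∈ W₁`, `x̃₂ ∈ W₂` and either
(`-x̃₁ ∈ W₁` and `0 ∈ I(x̃₁,x̃₂) ∩ I(-x̃₁,x̃₂)`) or (`-x̃₂ ∈ W₂` and
`0 ∈ I(x̃₁,x̃₂) ∩ I(x̃₁,-x̃₂)`), then `E(A, W₁ × W₂, I) ≥ |⟨x̃₂, x̃₁⟩|`. -/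
theorem optimal_recovery_lower_estimate_scalar_product
    {R Z : Type*} [NormedAddCommGroup R] [NormedSpace ℂ R]
    [AddCommGroup Z] [Module ℂ Z]
    (W₁ : Set R) (W₂ : Set (StrongDual ℂ R))
    (I : R × StrongDual ℂ R → Set Z)
    (hI : ∀ x ∈ W₁, ∀ y ∈ W₂, (I (x, y)).Nonempty)
    (x₁ : R) (x₂ : StrongDual ℂ R) (hx₁ : x₁ ∈ W₁) (hx₂ : x₂ ∈ W₂)
    (hcase :
      (-x₁ ∈ W₁ ∧ (0 : Z) ∈ I (x₁, x₂) ∧ (0 : Z) ∈ I (-x₁, x₂)) ∨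
      (-x₂ ∈ W₂ ∧ (0 : Z) ∈ I (x₁, x₂) ∧ (0 : Z) ∈ I (x₁, -x₂))) :
    (⨅ Φ : Z → ℂ, ⨆ x ∈ W₁, ⨆ y ∈ W₂, ⨆ z ∈ I (x, y), (‖y x - Φ z‖₊ : ℝ≥0∞)) ≥
      (‖x₂ x₁‖₊ : ℝ≥0∞) :=
  optimal_recovery_lower_estimate_scalar_product_general W₁ W₂ I x₁ x₂ hx₁ hx₂ hcase
end

section
/- Let n ∈ ℕ, 1 ≤ q < ∞ and ε₁,…,ε_n ≥ 0. If 1 − Σ_{k=1}^{n} ε_k^q/t_k^q ≥ 0 set m = n; otherwise choose m ∈ {0,1,…,n} such that 1 − Σ_{k=1}^{m} ε_k^q/t_k^q ≥ 0 and 1 − Σ_{k=1}^{m+1} ε_k^q/t_k^q < 0. Then E(W^T_q, I^n_{ε̄}) = E(W^T_q, I^n_{ε̄}, Φ*_m) = ( t_{m+1}^q + Σ_{k=1}^{m} (1 − t_{m+1}^q/t_k^q) ε_k^q )^{1/q}. -/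
open scoped ENNReal NNReal BigOperators

/-- The `ℓ_q` (quasi-)norm `(∑ |x_k|^q)^{1/q}` of a complex sequence, valued in `ℝ≥0∞`. -/
noncomputable def lqNorm (q : ℝ) (x : ℕ → ℂ) : ℝ≥0∞ :=
  (∑' k, (‖x k‖₊ : ℝ≥0∞) ^ q) ^ (1 / q)

/-- The class `W^T_q = {Th : h ∈ ℓ_q, ‖h‖_q ≤ 1}`, where `T` is the diagonal operator
determined by the sequence `t` (0-based indexing: `t k` is the paper's `t_{k+1}`). -/
def WT (q : ℝ) (t : ℕ → ℝ) : Set (ℕ → ℂ) :=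
  {x | ∃ h : ℕ → ℂ, (∀ k, x k = (t k : ℂ) * h k) ∧ lqNorm q h ≤ 1}

/-- The error `E(W, I, Φ) = sup_{x ∈ W} sup_{a ∈ I x} ‖x - Φ a‖_q` of a recovery
method `Φ`, measured in `ℓ_q`. -/
noncomputable def recErr {Z : Type*} (q : ℝ) (W : Set (ℕ → ℂ))
    (I : (ℕ → ℂ) → Set Z) (Φ : Z → ℕ → ℂ) : ℝ≥0∞ :=
  ⨆ x ∈ W, ⨆ a ∈ I x, lqNorm q (fun k => x k - Φ a k)

/-- The error of optimal recovery `E(W, I) = inf_Φ E(W, I, Φ)`. -/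
noncomputable def optErr {Z : Type*} (q : ℝ) (W : Set (ℕ → ℂ))
    (I : (ℕ → ℂ) → Set Z) : ℝ≥0∞ :=
  ⨅ Φ : Z → ℕ → ℂ, recErr q W I Φ

/-- The method `Φ*_m(a) = (a_1(1 − t_{m+1}^q/t_1^q), …, a_m(1 − t_{m+1}^q/t_m^q), 0, …)`
for information consisting of the first `n` coordinates (0-based: `t m` is the paper's
`t_{m+1}`); `PhiStar q t n 0` is the zero method `Φ*_0`. -/
noncomputable def PhiStar (q : ℝ) (t : ℕ → ℝ) (n m : ℕ) (a : Fin n → ℂ) : ℕ → ℂ :=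
  fun k => if h : k < n ∧ k < m then ((1 - t m ^ q / t k ^ q : ℝ) : ℂ) * a ⟨k, h.1⟩ else 0

/-- The information mapping `I^n_{ε̄}(x) = {a ∈ ℂⁿ : |x_k − a_k| ≤ ε_k, k = 1,…,n}`. -/
def infoCoord (n : ℕ) (ε : ℕ → ℝ) (x : ℕ → ℂ) : Set (Fin n → ℂ) :=
  {a | ∀ k : Fin n, ‖x (k : ℕ) - a k‖ ≤ ε (k : ℕ)}

/-!
Upper bound: for `k < m` the method errs in coordinate `k` by the convex combination
`λ x_k + (1 - λ)(x_k - a_k)` with `λ = t_m^q / t_k^q`, so convexity of `s ↦ s^q` bounds the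
`q`-th power of the error by `t_m^q |h_k|^q + (1 - λ) ε_k^q`; for `k ≥ m` it is
`|x_k|^q ≤ t_m^q |h_k|^q`. Summing and using `‖h‖_q ≤ 1` gives the bound.

Lower bound: take `x = T h` with `|h_k|^q = ε_k^q / t_k^q` for `k < m` and the rest of the
unit ball at `k = m`. The choice of `m` makes `|x_k| ≤ ε_k` for all `k < n`, so the
information `0` is consistent with both `x` and `-x`, and every method errs by at least
`‖x‖_q` on one of them.
-/

open MeasureTheory

section lqNorm

variable {q : ℝ}

lemma lqNorm_eq_eLpNorm' (x : ℕ → ℂ) : lqNorm q x = eLpNorm' x q Measure.count := by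
  simp [lqNorm, eLpNorm', lintegral_count, enorm_eq_nnnorm]

lemma lqNorm_add_le (hq : 1 ≤ q) (x y : ℕ → ℂ) : lqNorm q (x + y) ≤ lqNorm q x + lqNorm q y := by
  simpa only [lqNorm_eq_eLpNorm'] using
    eLpNorm'_add_le .of_discrete .of_discrete hq

lemma lqNorm_neg (x : ℕ → ℂ) : lqNorm q (-x) = lqNorm q x := by
  simp only [lqNorm_eq_eLpNorm', eLpNorm'_neg]

lemma lqNorm_const_smul (hq : 0 < q) (c : ℂ) (x : ℕ → ℂ) :
    lqNorm q (c • x) = ‖c‖ₑ * lqNorm q x := by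
  simp only [lqNorm_eq_eLpNorm', eLpNorm'_const_smul c hq]

lemma lqNorm_eq_tsum_ofReal (hq : 0 ≤ q) (x : ℕ → ℂ) :
    lqNorm q x = (∑' k, ENNReal.ofReal (‖x k‖ ^ q)) ^ (1 / q) := by
  simp only [lqNorm, ← enorm_eq_nnnorm, ← ofReal_norm,
    ENNReal.ofReal_rpow_of_nonneg (norm_nonneg _) hq]

lemma lqNorm_le_one_iff (hq : 0 < q) {x : ℕ → ℂ} :
    lqNorm q x ≤ 1 ↔ ∑' k, ENNReal.ofReal (‖x k‖ ^ q) ≤ 1 := by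
  rw [lqNorm_eq_tsum_ofReal hq.le, one_div, ENNReal.rpow_inv_le_iff hq, ENNReal.one_rpow]

lemma lqNorm_eq_ofReal_of_support_subset (hq : 0 < q) {x : ℕ → ℂ} {s : Finset ℕ}
    (hx : ∀ k ∉ s, x k = 0) : lqNorm q x = ENNReal.ofReal ((∑ k ∈ s, ‖x k‖ ^ q) ^ (1 / q)) := by
  have hzero : ∀ k ∉ s, ENNReal.ofReal (‖x k‖ ^ q) = 0 := fun k hk => by
    simp [hx k hk, Real.zero_rpow hq.ne']
  rw [lqNorm_eq_tsum_ofReal hq.le, tsum_eq_sum hzero,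
    ← ENNReal.ofReal_sum_of_nonneg fun k _ => by positivity,
    ENNReal.ofReal_rpow_of_nonneg (by positivity) (by positivity)]

lemma lqNorm_le_of_rpow_norm_le {A : ℝ} (hq : 0 < q) (hA : 0 ≤ A) {m : ℕ} {c : ℕ → ℝ}
    (hc : ∀ k < m, 0 ≤ c k) {y h : ℕ → ℂ} (hh : lqNorm q h ≤ 1)
    (hy : ∀ k, ‖y k‖ ^ q ≤ A * ‖h k‖ ^ q + if k < m then c k else 0) :
    lqNorm q y ≤ ENNReal.ofReal ((A + ∑ k ∈ Finset.range m, c k) ^ (1 / q)) := by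
  have hc' : ∀ k, 0 ≤ if k < m then c k else 0 := fun k => by
    split_ifs with hk
    exacts [hc k hk, le_rfl]
  have hcsum : ∑' k, ENNReal.ofReal (if k < m then c k else 0) =
      ENNReal.ofReal (∑ k ∈ Finset.range m, c k) := by
    rw [tsum_eq_sum (s := Finset.range m) fun k hk => by
      rw [if_neg (by simpa using hk), ENNReal.ofReal_zero],
      ← ENNReal.ofReal_sum_of_nonneg fun k _ => hc' k]
    exact congrArg _ (Finset.sum_congr rfl fun k hk => if_pos (Finset.mem_range.1 hk))
  have hcsum_nonneg : 0 ≤ ∑ k ∈ Finset.range m, c k :=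
    Finset.sum_nonneg fun k hk => hc k (Finset.mem_range.1 hk)
  have hsum : ∑' k, ENNReal.ofReal (‖y k‖ ^ q) ≤
      ENNReal.ofReal (A + ∑ k ∈ Finset.range m, c k) :=
    calc ∑' k, ENNReal.ofReal (‖y k‖ ^ q)
        ≤ ∑' k, (ENNReal.ofReal A * ENNReal.ofReal (‖h k‖ ^ q) +
            ENNReal.ofReal (if k < m then c k else 0)) := by
          refine ENNReal.tsum_le_tsum fun k => ?_
          rw [← ENNReal.ofReal_mul hA, ← ENNReal.ofReal_add (by positivity) (hc' k)]
          exact ENNReal.ofReal_le_ofReal (hy k)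
      _ = ENNReal.ofReal A * ∑' k, ENNReal.ofReal (‖h k‖ ^ q) +
            ENNReal.ofReal (∑ k ∈ Finset.range m, c k) := by
          rw [ENNReal.tsum_add, ENNReal.tsum_mul_left, hcsum]
      _ ≤ ENNReal.ofReal A * 1 + ENNReal.ofReal (∑ k ∈ Finset.range m, c k) := by
          gcongr
          exact (lqNorm_le_one_iff hq).1 hh
      _ = ENNReal.ofReal (A + ∑ k ∈ Finset.range m, c k) := by
          rw [mul_one, ENNReal.ofReal_add hA hcsum_nonneg]
  rw [lqNorm_eq_tsum_ofReal hq.le,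
    ← ENNReal.ofReal_rpow_of_nonneg (add_nonneg hA hcsum_nonneg) (by positivity)]
  exact ENNReal.rpow_le_rpow hsum (by positivity)

end lqNorm

lemma norm_sub_smul_rpow_le {E : Type*} [SeminormedAddCommGroup E] [NormedSpace ℝ E]
    {q l e : ℝ} (hq : 1 ≤ q) (hl₀ : 0 ≤ l) (hl₁ : l ≤ 1) {x a : E} (ha : ‖x - a‖ ≤ e) :
    ‖x - (1 - l) • a‖ ^ q ≤ l * ‖x‖ ^ q + (1 - l) * e ^ q := by
  have he : 0 ≤ e := (norm_nonneg _).trans ha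
  have hnorm : ‖x - (1 - l) • a‖ ≤ l * ‖x‖ + (1 - l) * e :=
    calc ‖x - (1 - l) • a‖ = ‖l • x + (1 - l) • (x - a)‖ := by congr 1; module
      _ ≤ l * ‖x‖ + (1 - l) * ‖x - a‖ := by
          refine (norm_add_le _ _).trans_eq ?_
          rw [norm_smul_of_nonneg hl₀, norm_smul_of_nonneg (sub_nonneg.2 hl₁)]
      _ ≤ l * ‖x‖ + (1 - l) * e := by gcongr
  calc ‖x - (1 - l) • a‖ ^ q ≤ (l * ‖x‖ + (1 - l) * e) ^ q := by gcongr
    _ ≤ l * ‖x‖ ^ q + (1 - l) * e ^ q :=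
        (convexOn_rpow hq).2 (norm_nonneg x) he hl₀ (sub_nonneg.2 hl₁) (by ring)

lemma rpow_div_rpow_mem_Icc {q : ℝ} (hq : 0 ≤ q) {t : ℕ → ℝ} (htpos : ∀ k, 0 < t k)
    (htmono : Antitone t) {k m : ℕ} (hkm : k ≤ m) : t m ^ q / t k ^ q ∈ Set.Icc 0 1 :=
  ⟨div_nonneg (Real.rpow_nonneg (htpos m).le q) (Real.rpow_nonneg (htpos k).le q),
    div_le_one_of_le₀ (Real.rpow_le_rpow (htpos m).le (htmono hkm) hq)
      (Real.rpow_nonneg (htpos k).le q)⟩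

lemma rpow_norm_sub_phiStar_le {q : ℝ} (hq : 1 ≤ q) {t : ℕ → ℝ} (htpos : ∀ k, 0 < t k)
    (htmono : Antitone t) {n m : ℕ} (hmn : m ≤ n) {ε : ℕ → ℝ} {x h : ℕ → ℂ}
    (hx : ∀ k, x k = t k * h k) {a : Fin n → ℂ} (ha : a ∈ infoCoord n ε x) (k : ℕ) :
    ‖x k - PhiStar q t n m a k‖ ^ q ≤
      t m ^ q * ‖h k‖ ^ q + if k < m then (1 - t m ^ q / t k ^ q) * ε k ^ q else 0 := by
  have hq₀ : 0 ≤ q := zero_le_one.trans hq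
  have hxk : ‖x k‖ ^ q = t k ^ q * ‖h k‖ ^ q := by
    rw [hx, norm_mul, Complex.norm_real, Real.norm_of_nonneg (htpos k).le,
      Real.mul_rpow (htpos k).le (norm_nonneg _)]
  split_ifs with hk
  · have hkn : k < n := hk.trans_le hmn
    obtain ⟨hl₀, hl₁⟩ := rpow_div_rpow_mem_Icc hq₀ htpos htmono hk.le
    have hphi : PhiStar q t n m a k = (1 - t m ^ q / t k ^ q) • a ⟨k, hkn⟩ := by
      simp [PhiStar, hkn, hk, Complex.real_smul]
    calc ‖x k - PhiStar q t n m a k‖ ^ q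
        ≤ t m ^ q / t k ^ q * ‖x k‖ ^ q + (1 - t m ^ q / t k ^ q) * ε k ^ q :=
          hphi ▸ norm_sub_smul_rpow_le hq hl₀ hl₁ (ha ⟨k, hkn⟩)
      _ = t m ^ q * ‖h k‖ ^ q + (1 - t m ^ q / t k ^ q) * ε k ^ q := by
          rw [hxk]; field_simp [(Real.rpow_pos_of_pos (htpos k) q).ne']
  · have hphi : PhiStar q t n m a k = 0 := by simp [PhiStar, hk]
    rw [hphi, sub_zero, hxk, add_zero]
    exact mul_le_mul_of_nonneg_right
      (Real.rpow_le_rpow (htpos k).le (htmono (not_lt.1 hk)) hq₀) (by positivity)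

lemma recErr_phiStar_le {q : ℝ} (hq : 1 ≤ q) {t : ℕ → ℝ} (htpos : ∀ k, 0 < t k)
    (htmono : Antitone t) {n m : ℕ} (hmn : m ≤ n) {ε : ℕ → ℝ} (hε : ∀ k < n, 0 ≤ ε k) :
    recErr q (WT q t) (infoCoord n ε) (PhiStar q t n m) ≤
      ENNReal.ofReal
        ((t m ^ q + ∑ k ∈ Finset.range m, (1 - t m ^ q / t k ^ q) * ε k ^ q) ^ (1 / q)) := by
  have hq₀ : 0 ≤ q := zero_le_one.trans hq
  have hweight : ∀ k < m, 0 ≤ (1 - t m ^ q / t k ^ q) * ε k ^ q := fun k hk =>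
    mul_nonneg (sub_nonneg.2 (rpow_div_rpow_mem_Icc hq₀ htpos htmono hk.le).2)
      (Real.rpow_nonneg (hε k (hk.trans_le hmn)) q)
  refine iSup₂_le fun x ⟨h, hx, hh⟩ => iSup₂_le fun a ha => ?_
  exact lqNorm_le_of_rpow_norm_le (by linarith) (Real.rpow_nonneg (htpos m).le q) hweight hh
    (rpow_norm_sub_phiStar_le hq htpos htmono hmn hx ha)

lemma le_recErr {Z : Type*} {q : ℝ} {W : Set (ℕ → ℂ)} {I : (ℕ → ℂ) → Set Z}
    (Φ : Z → ℕ → ℂ) {x : ℕ → ℂ} (hx : x ∈ W) {a : Z} (ha : a ∈ I x) :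
    lqNorm q (x - Φ a) ≤ recErr q W I Φ :=
  le_iSup₂_of_le x hx (le_iSup₂_of_le (f := fun a _ => lqNorm q (x - Φ a)) a ha le_rfl)

lemma lqNorm_le_recErr_of_neg_mem {Z : Type*} {q : ℝ} (hq : 1 ≤ q) {W : Set (ℕ → ℂ)}
    {I : (ℕ → ℂ) → Set Z} (Φ : Z → ℕ → ℂ) {x : ℕ → ℂ} (hx : x ∈ W) (hnx : -x ∈ W) {a : Z}
    (ha : a ∈ I x) (hna : a ∈ I (-x)) :
    lqNorm q x ≤ recErr q W I Φ := by
  set E := recErr q W I Φ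
  have htwice : 2 * lqNorm q x ≤ 2 * E :=
    calc 2 * lqNorm q x = lqNorm q ((2 : ℂ) • x) := by
          rw [lqNorm_const_smul (by linarith), ← ofReal_norm]; norm_num
      _ = lqNorm q ((x - Φ a) + -(-x - Φ a)) := by congr 1; module
      _ ≤ lqNorm q (x - Φ a) + lqNorm q (-x - Φ a) := by
          rw [← lqNorm_neg (-x - Φ a)]; exact lqNorm_add_le hq _ _
      _ ≤ E + E := add_le_add (le_recErr Φ hx ha) (le_recErr Φ hnx hna)
      _ = 2 * E := (two_mul E).symm
  exact (ENNReal.mul_le_mul_iff_right two_ne_zero ENNReal.ofNat_ne_top).1 htwice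

lemma neg_mem_WT {q : ℝ} {t : ℕ → ℝ} {x : ℕ → ℂ} (hx : x ∈ WT q t) : -x ∈ WT q t := by
  obtain ⟨h, hxh, hh⟩ := hx
  exact ⟨-h, fun k => by simp [hxh k], by rwa [lqNorm_neg]⟩

lemma neg_mem_infoCoord_neg {n : ℕ} {ε : ℕ → ℝ} {x : ℕ → ℂ} {a : Fin n → ℂ}
    (ha : a ∈ infoCoord n ε x) : -a ∈ infoCoord n ε (-x) := fun k => by
  rw [Pi.neg_apply, Pi.neg_apply, ← neg_sub', norm_neg]
  exact ha k

lemma norm_ofReal_rpow_one_div_rpow {q w : ℝ} (hq : q ≠ 0) (hw : 0 ≤ w) :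
    ‖((w ^ (1 / q) : ℝ) : ℂ)‖ ^ q = w := by
  rw [Complex.norm_real, Real.norm_of_nonneg (by positivity), ← Real.rpow_mul hw,
    one_div_mul_cancel hq, Real.rpow_one]

/-- `|h_k|^q` for the extremal element `x = T h` of the lower bound. -/
noncomputable def extremalWeight (q : ℝ) (t ε : ℕ → ℝ) (m k : ℕ) : ℝ :=
  if k < m then ε k ^ q / t k ^ q
  else if k = m then 1 - ∑ j ∈ Finset.range m, ε j ^ q / t j ^ q else 0

section extremalWeight

variable {q : ℝ} {t ε : ℕ → ℝ} {m : ℕ}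

lemma extremalWeight_of_gt {k : ℕ} (hk : m < k) : extremalWeight q t ε m k = 0 := by
  simp [extremalWeight, hk.not_gt, hk.ne']

lemma extremalWeight_nonneg (ht : ∀ k, 0 ≤ t k) (hε : ∀ k < m, 0 ≤ ε k)
    (hs : ∑ k ∈ Finset.range m, ε k ^ q / t k ^ q ≤ 1) (k : ℕ) :
    0 ≤ extremalWeight q t ε m k := by
  unfold extremalWeight
  split_ifs with hk
  · exact div_nonneg (Real.rpow_nonneg (hε k hk) q) (Real.rpow_nonneg (ht k) q)
  · exact sub_nonneg.2 hs
  · exact le_rfl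

lemma sum_extremalWeight : ∑ k ∈ Finset.range (m + 1), extremalWeight q t ε m k = 1 := by
  have hfirst : ∀ k ∈ Finset.range m, extremalWeight q t ε m k = ε k ^ q / t k ^ q :=
    fun k hk => if_pos (Finset.mem_range.1 hk)
  rw [Finset.sum_range_succ, Finset.sum_congr rfl hfirst]
  simp [extremalWeight]

lemma sum_rpow_mul_extremalWeight (htpos : ∀ k, 0 < t k) :
    ∑ k ∈ Finset.range (m + 1), t k ^ q * extremalWeight q t ε m k =
      t m ^ q + ∑ k ∈ Finset.range m, (1 - t m ^ q / t k ^ q) * ε k ^ q := by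
  have hterm : ∀ k ∈ Finset.range m, t k ^ q * extremalWeight q t ε m k =
      (1 - t m ^ q / t k ^ q) * ε k ^ q + t m ^ q * (ε k ^ q / t k ^ q) := fun k hk => by
    have := (Real.rpow_pos_of_pos (htpos k) q).ne'
    rw [extremalWeight, if_pos (Finset.mem_range.1 hk)]
    field_simp
    ring
  rw [Finset.sum_range_succ, Finset.sum_congr rfl hterm, Finset.sum_add_distrib,
    ← Finset.mul_sum]
  simp only [extremalWeight, lt_irrefl, if_false, if_true]
  ring

lemma rpow_mul_extremalWeight_le {n : ℕ} (htpos : ∀ k, 0 < t k) (hε : ∀ k < n, 0 ≤ ε k)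
    (hnext : m < n → 1 - ∑ k ∈ Finset.range m, ε k ^ q / t k ^ q ≤ ε m ^ q / t m ^ q)
    {k : ℕ} (hk : k < n) : t k ^ q * extremalWeight q t ε m k ≤ ε k ^ q := by
  have htk := Real.rpow_pos_of_pos (htpos k) q
  rcases lt_trichotomy k m with hkm | rfl | hmk
  · rw [extremalWeight, if_pos hkm, mul_div_cancel₀ _ htk.ne']
  · rw [extremalWeight, if_neg (lt_irrefl k), if_pos rfl, ← le_div_iff₀' htk]
    exact hnext hk
  · rw [extremalWeight_of_gt hmk, mul_zero]
    exact Real.rpow_nonneg (hε k hk) q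

end extremalWeight

lemma ofReal_le_recErr_infoCoord {q : ℝ} (hq : 1 ≤ q) {t : ℕ → ℝ} (htpos : ∀ k, 0 < t k)
    {n m : ℕ} (hmn : m ≤ n) {ε : ℕ → ℝ} (hε : ∀ k < n, 0 ≤ ε k)
    (hs : ∑ k ∈ Finset.range m, ε k ^ q / t k ^ q ≤ 1)
    (hnext : m < n → 1 - ∑ k ∈ Finset.range m, ε k ^ q / t k ^ q ≤ ε m ^ q / t m ^ q)
    (Φ : (Fin n → ℂ) → ℕ → ℂ) :
    ENNReal.ofReal
        ((t m ^ q + ∑ k ∈ Finset.range m, (1 - t m ^ q / t k ^ q) * ε k ^ q) ^ (1 / q)) ≤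
      recErr q (WT q t) (infoCoord n ε) Φ := by
  have hq₀ : 0 < q := zero_lt_one.trans_le hq
  set w := extremalWeight q t ε m
  have hw : ∀ k, 0 ≤ w k := extremalWeight_nonneg (fun k => (htpos k).le)
    (fun k hk => hε k (hk.trans_le hmn)) hs
  set h : ℕ → ℂ := fun k => ((w k ^ (1 / q) : ℝ) : ℂ)
  set x : ℕ → ℂ := fun k => t k * h k
  have hnorm_h : ∀ k, ‖h k‖ ^ q = w k := fun k => norm_ofReal_rpow_one_div_rpow hq₀.ne' (hw k)
  have hnorm_x : ∀ k, ‖x k‖ ^ q = t k ^ q * w k := fun k => by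
    rw [norm_mul, Complex.norm_real, Real.norm_of_nonneg (htpos k).le,
      Real.mul_rpow (htpos k).le (norm_nonneg _), hnorm_h]
  have hsupp : ∀ k ∉ Finset.range (m + 1), h k = 0 := fun k hk => by
    have hmk : m < k := by simpa [Nat.lt_succ_iff] using hk
    simp [h, w, extremalWeight_of_gt hmk, Real.zero_rpow (inv_ne_zero hq₀.ne')]
  have hxW : x ∈ WT q t := ⟨h, fun k => rfl, by
    rw [lqNorm_eq_ofReal_of_support_subset hq₀ hsupp]
    simp [hnorm_h, w, sum_extremalWeight]⟩
  have hinfo : (0 : Fin n → ℂ) ∈ infoCoord n ε x := fun k => by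
    rw [Pi.zero_apply, sub_zero, ← Real.rpow_le_rpow_iff (norm_nonneg _) (hε k k.isLt) hq₀,
      hnorm_x]
    exact rpow_mul_extremalWeight_le htpos hε hnext k.isLt
  calc ENNReal.ofReal
        ((t m ^ q + ∑ k ∈ Finset.range m, (1 - t m ^ q / t k ^ q) * ε k ^ q) ^ (1 / q))
      = lqNorm q x := by
        rw [lqNorm_eq_ofReal_of_support_subset hq₀ (s := Finset.range (m + 1))
          fun k hk => by simp [x, hsupp k hk]]
        simp only [hnorm_x, w, sum_rpow_mul_extremalWeight htpos]
    _ ≤ recErr q (WT q t) (infoCoord n ε) Φ :=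
        lqNorm_le_recErr_of_neg_mem hq Φ hxW (neg_mem_WT hxW) hinfo
          (by simpa using neg_mem_infoCoord_neg hinfo)

theorem optimal_recovery_coordinatewise_error_general
    (n : ℕ) (q : ℝ) (hq : 1 ≤ q)
    (t : ℕ → ℝ) (htpos : ∀ k, 0 < t k) (htmono : Antitone t)
    (ε : ℕ → ℝ) (hε : ∀ k, k < n → 0 ≤ ε k) (m : ℕ)
    (hm : (1 - ∑ k ∈ Finset.range n, ε k ^ q / t k ^ q ≥ 0 ∧ m = n) ∨
      (m ≤ n ∧ 1 - ∑ k ∈ Finset.range m, ε k ^ q / t k ^ q ≥ 0 ∧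
        1 - ∑ k ∈ Finset.range (m + 1), ε k ^ q / t k ^ q < 0)) :
    optErr q (WT q t) (infoCoord n ε) =
      recErr q (WT q t) (infoCoord n ε) (PhiStar q t n m) ∧
    recErr q (WT q t) (infoCoord n ε) (PhiStar q t n m) =
      ENNReal.ofReal
        ((t m ^ q + ∑ k ∈ Finset.range m, (1 - t m ^ q / t k ^ q) * ε k ^ q) ^ (1 / q)) := by
  obtain ⟨hmn, hs, hnext⟩ : m ≤ n ∧ ∑ k ∈ Finset.range m, ε k ^ q / t k ^ q ≤ 1 ∧
      (m < n → 1 - ∑ k ∈ Finset.range m, ε k ^ q / t k ^ q ≤ ε m ^ q / t m ^ q) := by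
    rcases hm with ⟨hs, rfl⟩ | ⟨hmn, hs, hs'⟩
    · exact ⟨le_rfl, by linarith, fun h => absurd h (lt_irrefl m)⟩
    · rw [Finset.sum_range_succ] at hs'
      exact ⟨hmn, by linarith, fun _ => by linarith⟩
  have hupper := recErr_phiStar_le hq htpos htmono hmn hε
  have hlower : _ ≤ optErr q (WT q t) (infoCoord n ε) :=
    le_iInf (ofReal_le_recErr_infoCoord hq htpos hmn hε hs hnext)
  have hopt : optErr q (WT q t) (infoCoord n ε) ≤
      recErr q (WT q t) (infoCoord n ε) (PhiStar q t n m) := iInf_le _ _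
  exact ⟨le_antisymm hopt (hupper.trans hlower), le_antisymm hupper (hlower.trans hopt)⟩

/-- Theorem 1: optimal recovery of `W^T_q` from the first `n` coordinates
known with coordinatewise errors `ε_k`. -/
theorem optimal_recovery_coordinatewise_error
    (n : ℕ) (hn : 1 ≤ n) (q : ℝ) (hq : 1 ≤ q)
    (t : ℕ → ℝ) (htpos : ∀ k, 0 < t k) (htmono : Antitone t)
    (ε : ℕ → ℝ) (hε : ∀ k, k < n → 0 ≤ ε k) (m : ℕ)
    (hm : (1 - ∑ k ∈ Finset.range n, ε k ^ q / t k ^ q ≥ 0 ∧ m = n) ∨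
      (m ≤ n ∧ 1 - ∑ k ∈ Finset.range m, ε k ^ q / t k ^ q ≥ 0 ∧
        1 - ∑ k ∈ Finset.range (m + 1), ε k ^ q / t k ^ q < 0)) :
    optErr q (WT q t) (infoCoord n ε) =
      recErr q (WT q t) (infoCoord n ε) (PhiStar q t n m) ∧
    recErr q (WT q t) (infoCoord n ε) (PhiStar q t n m) =
      ENNReal.ofReal
        ((t m ^ q + ∑ k ∈ Finset.range m, (1 - t m ^ q / t k ^ q) * ε k ^ q) ^ (1 / q)) :=
  optimal_recovery_coordinatewise_error_general n q hq t htpos htmono ε hε m hm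
end

section
/- Let n ∈ ℕ, 1 ≤ q < ∞, 0 < p ≤ q and ε ≥ 0. If ε ∈ [0, t₁] then E(W^T_q, I^n_{ε,p}) = E(W^T_q, I^n_{ε,p}, Φ*_n) = ( t_{n+1}^q + ε^q (1 − t_{n+1}^q/t_1^q) )^{1/q}; and if ε > t₁ then E(W^T_q, I^n_{ε,p}) = E(W^T_q, I^n_{ε,p}, Φ*_0) = t₁. -/
open scoped ENNReal NNReal BigOperators

/-- The information mapping `I^n_{ε,p}(x) = {a ∈ ℂⁿ : (∑_{k=1}^n |x_k − a_k|^p)^{1/p} ≤ ε}`. -/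
def infoLp (n : ℕ) (p ε : ℝ) (x : ℕ → ℂ) : Set (Fin n → ℂ) :=
  {a | (∑ k : Fin n, ‖x (k : ℕ) - a k‖ ^ p) ^ (1 / p) ≤ ε}

/-! ### Auxiliary lemmas -/

private lemma nnnorm_real_coe {r : ℝ} (hr : 0 ≤ r) : ‖(r : ℂ)‖₊ = r.toNNReal := by
  rw [Complex.nnnorm_real, Real.nnnorm_of_nonneg hr, Real.toNNReal_of_nonneg hr]

private lemma toNNReal_rpow {r : ℝ} (hr : 0 ≤ r) (q : ℝ) :
    r.toNNReal ^ q = (r ^ q).toNNReal := by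
  apply NNReal.coe_injective
  rw [NNReal.coe_rpow, Real.coe_toNNReal _ hr, Real.coe_toNNReal _ (Real.rpow_nonneg hr q)]

private lemma sum_rpow_le_rpow_sum' {ι : Type*} (s : Finset ι) (f : ι → ℝ≥0) {r : ℝ}
    (hr : 1 ≤ r) : ∑ k ∈ s, f k ^ r ≤ (∑ k ∈ s, f k) ^ r := by
  classical
  induction s using Finset.cons_induction with
  | empty => simp
  | cons a s ha ih =>
    rw [Finset.sum_cons, Finset.sum_cons]
    calc f a ^ r + ∑ k ∈ s, f k ^ r ≤ f a ^ r + (∑ k ∈ s, f k) ^ r := by gcongr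
      _ ≤ _ := NNReal.add_rpow_le_rpow_add _ _ hr

private lemma info_sum_q {n : ℕ} {p q ε : ℝ} (hp : 0 < p) (hpq : p ≤ q) (hε : 0 ≤ ε)
    {x : ℕ → ℂ} {a : Fin n → ℂ} (ha : a ∈ infoLp n p ε x) :
    ∑ k : Fin n, ‖x (k : ℕ) - a k‖₊ ^ q ≤ ε.toNNReal ^ q := by
  have hq0 : (0:ℝ) < q := hp.trans_le hpq
  have h0 : (0:ℝ) ≤ ∑ k : Fin n, ‖x (k : ℕ) - a k‖ ^ p := by positivity
  have h1 : ∑ k : Fin n, ‖x (k : ℕ) - a k‖ ^ p ≤ ε ^ p := by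
    have h2 := Real.rpow_le_rpow (Real.rpow_nonneg h0 _) ha hp.le
    rwa [← Real.rpow_mul h0, one_div, inv_mul_cancel₀ hp.ne', Real.rpow_one] at h2
  have h2 : ∑ k : Fin n, ‖x (k : ℕ) - a k‖₊ ^ p ≤ ε.toNNReal ^ p := by
    rw [← NNReal.coe_le_coe]
    push_cast [Real.coe_toNNReal ε hε]
    exact h1
  have hr : 1 ≤ q / p := (one_le_div hp).2 hpq
  have hpq' : p * (q / p) = q := by field_simp
  calc ∑ k : Fin n, ‖x (k : ℕ) - a k‖₊ ^ q
      = ∑ k : Fin n, (‖x (k : ℕ) - a k‖₊ ^ p) ^ (q / p) := by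
        refine Finset.sum_congr rfl fun k _ => ?_
        rw [← NNReal.rpow_mul, hpq']
    _ ≤ (∑ k : Fin n, ‖x (k : ℕ) - a k‖₊ ^ p) ^ (q / p) :=
        sum_rpow_le_rpow_sum' _ _ hr
    _ ≤ (ε.toNNReal ^ p) ^ (q / p) :=
        NNReal.rpow_le_rpow h2 (le_trans zero_le_one hr)
    _ = ε.toNNReal ^ q := by rw [← NNReal.rpow_mul, hpq']

private lemma pointwise_bound {q : ℝ} (hq : 1 ≤ q) {tn tk t0 : ℝ}
    (htn : 0 < tn) (h1 : tn ≤ tk) (h2 : tk ≤ t0) (u v : ℂ) :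
    ‖u - ((1 - tn ^ q / tk ^ q : ℝ) : ℂ) * v‖₊ ^ q
      ≤ (1 - tn ^ q / t0 ^ q).toNNReal * ‖u - v‖₊ ^ q
        + (tn ^ q / tk ^ q).toNNReal * ‖u‖₊ ^ q := by
  have hq0 : (0:ℝ) < q := lt_of_lt_of_le one_pos hq
  have htk : 0 < tk := htn.trans_le h1
  have ht0 : 0 < t0 := htk.trans_le h2
  set θ : ℝ := tn ^ q / tk ^ q with hθdef
  have hθ0 : 0 < θ := by positivity
  have hθ1 : θ ≤ 1 := by
    rw [hθdef, div_le_one (by positivity)]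
    exact Real.rpow_le_rpow htn.le h1 hq0.le
  have hθ0' : tn ^ q / t0 ^ q ≤ θ := by
    rw [hθdef]
    apply div_le_div_of_nonneg_left (Real.rpow_nonneg htn.le q) (by positivity)
    exact Real.rpow_le_rpow htk.le h2 hq0.le
  have key : ‖u - ((1 - θ : ℝ) : ℂ) * v‖₊ ≤ (1 - θ).toNNReal * ‖u - v‖₊
      + θ.toNNReal * ‖u‖₊ := by
    have hid : u - ((1 - θ : ℝ) : ℂ) * v = ((1 - θ : ℝ) : ℂ) * (u - v) + ((θ : ℝ) : ℂ) * u := by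
      push_cast; ring
    rw [hid]
    refine (nnnorm_add_le _ _).trans ?_
    rw [nnnorm_mul, nnnorm_mul, nnnorm_real_coe (by linarith), nnnorm_real_coe hθ0.le]
  have hw : (1 - θ).toNNReal + θ.toNNReal = 1 := by
    rw [← Real.toNNReal_add (by linarith) hθ0.le, sub_add_cancel, Real.toNNReal_one]
  calc ‖u - ((1 - θ : ℝ) : ℂ) * v‖₊ ^ q
      ≤ ((1 - θ).toNNReal * ‖u - v‖₊ + θ.toNNReal * ‖u‖₊) ^ q :=
        NNReal.rpow_le_rpow key hq0.le
    _ ≤ (1 - θ).toNNReal * ‖u - v‖₊ ^ q + θ.toNNReal * ‖u‖₊ ^ q :=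
        NNReal.rpow_arith_mean_le_arith_mean2_rpow _ _ _ _ hw hq
    _ ≤ (1 - tn ^ q / t0 ^ q).toNNReal * ‖u - v‖₊ ^ q + θ.toNNReal * ‖u‖₊ ^ q := by
        gcongr


private lemma enorm_real_rpow {q : ℝ} (hq0 : 0 < q) {r : ℝ} (hr : 0 ≤ r) :
    (‖((r : ℝ) : ℂ)‖₊ : ℝ≥0∞) ^ q = ENNReal.ofReal (r ^ q) := by
  rw [nnnorm_real_coe hr, ← ENNReal.coe_rpow_of_nonneg _ hq0.le, toNNReal_rpow hr]
  rfl

private lemma nnnorm_mul_coord {q : ℝ} (hq0 : 0 < q) {r : ℝ} (hr : 0 ≤ r) (z : ℂ) :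
    (‖(r : ℂ) * z‖₊ : ℝ≥0∞) ^ q = ENNReal.ofReal (r ^ q) * (‖z‖₊ : ℝ≥0∞) ^ q := by
  rw [nnnorm_mul, ENNReal.coe_mul, ENNReal.mul_rpow_of_nonneg _ _ hq0.le,
    enorm_real_rpow hq0 hr]

private lemma lq_le_one {q : ℝ} (hq0 : 0 < q) {h : ℕ → ℂ} (hh : lqNorm q h ≤ 1) :
    ∑' k, (‖h k‖₊ : ℝ≥0∞) ^ q ≤ 1 := by
  rw [lqNorm, ← ENNReal.one_rpow (1 / q)] at hh
  exact (ENNReal.rpow_le_rpow_iff (one_div_pos.mpr hq0)).mp hh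

private lemma tsum_support_pair {f : ℕ → ℝ≥0∞} {n : ℕ} (hn : 0 < n)
    (hf : ∀ k, k ≠ 0 → k ≠ n → f k = 0) : ∑' k, f k = f 0 + f n := by
  classical
  rw [tsum_eq_sum (s := {0, n}) (fun b hb => by
    simp only [Finset.mem_insert, Finset.mem_singleton, not_or] at hb
    exact hf b hb.1 hb.2)]
  exact Finset.sum_pair (by omega)

private lemma tsum_support_single {f : ℕ → ℝ≥0∞} (hf : ∀ k, k ≠ 0 → f k = 0) :
    ∑' k, f k = f 0 := by
  classical
  rw [tsum_eq_sum (s := {0}) (fun b hb => hf b (by simpa using hb)), Finset.sum_singleton]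

private lemma WT_neg {q : ℝ} {t : ℕ → ℝ} {x : ℕ → ℂ} (hx : x ∈ WT q t) :
    (fun k => -x k) ∈ WT q t := by
  obtain ⟨h, hxh, hh⟩ := hx
  refine ⟨fun k => -h k, fun k => by show -x k = (t k : ℂ) * -h k; rw [hxh k]; ring, ?_⟩
  simpa [lqNorm] using hh

private lemma zero_mem_info {n : ℕ} (hn : 1 ≤ n) {p ε : ℝ} (hp : 0 < p) (hε : 0 ≤ ε)
    {x : ℕ → ℂ} (hx0 : ‖x 0‖ ≤ ε) (hx : ∀ k : ℕ, 0 < k → k < n → x k = 0) :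
    (0 : Fin n → ℂ) ∈ infoLp n p ε x := by
  simp only [infoLp, Set.mem_setOf_eq, Pi.zero_apply, sub_zero]
  have hsum : ∑ k : Fin n, ‖x (k : ℕ)‖ ^ p = ‖x 0‖ ^ p := by
    rw [Finset.sum_eq_single (⟨0, hn⟩ : Fin n)]
    · intro b _ hb
      have hb0 : (0:ℕ) < (b : ℕ) := by
        rcases Nat.eq_zero_or_pos (b : ℕ) with h | h
        · exact absurd (Fin.ext h) hb
        · exact h
      rw [hx _ hb0 b.isLt, norm_zero, Real.zero_rpow hp.ne']
    · intro hcon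
      exact absurd (Finset.mem_univ _) hcon
  rw [hsum, ← Real.rpow_mul (norm_nonneg _), mul_one_div_cancel hp.ne', Real.rpow_one]
  exact hx0

private lemma lower_max {q : ℝ} (hq : 1 ≤ q) (x c : ℕ → ℂ) :
    ∑' k, (‖x k‖₊ : ℝ≥0∞) ^ q ≤
      max (∑' k, (‖x k - c k‖₊ : ℝ≥0∞) ^ q) (∑' k, (‖-x k - c k‖₊ : ℝ≥0∞) ^ q) := by
  have hq0 : (0:ℝ) < q := lt_of_lt_of_le one_pos hq
  have point : ∀ u v : ℂ, (‖u‖₊ : ℝ≥0∞) ^ q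
      ≤ 2⁻¹ * (‖u - v‖₊ : ℝ≥0∞) ^ q + 2⁻¹ * (‖-u - v‖₊ : ℝ≥0∞) ^ q := by
    intro u v
    have h2 : (‖u‖₊ : ℝ≥0∞) ≤ 2⁻¹ * (‖u - v‖₊ : ℝ≥0∞) + 2⁻¹ * (‖-u - v‖₊ : ℝ≥0∞) := by
      have hr : 2 * ‖u‖ ≤ ‖u - v‖ + ‖-u - v‖ := by
        have hid : (u - v) - (-u - v) = 2 * u := by ring
        calc 2 * ‖u‖ = ‖(u - v) - (-u - v)‖ := by
              rw [hid, norm_mul]; simp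
          _ ≤ ‖u - v‖ + ‖-u - v‖ := norm_sub_le _ _
      have hnn : ‖u‖₊ ≤ 2⁻¹ * ‖u - v‖₊ + 2⁻¹ * ‖-u - v‖₊ := by
        rw [← NNReal.coe_le_coe]
        push_cast
        linarith
      calc (‖u‖₊ : ℝ≥0∞) ≤ ((2⁻¹ * ‖u - v‖₊ + 2⁻¹ * ‖-u - v‖₊ : ℝ≥0) : ℝ≥0∞) :=
            ENNReal.coe_le_coe.mpr hnn
        _ = 2⁻¹ * (‖u - v‖₊ : ℝ≥0∞) + 2⁻¹ * (‖-u - v‖₊ : ℝ≥0∞) := by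
            push_cast
            rfl
    calc (‖u‖₊ : ℝ≥0∞) ^ q ≤ (2⁻¹ * (‖u - v‖₊ : ℝ≥0∞) + 2⁻¹ * (‖-u - v‖₊ : ℝ≥0∞)) ^ q :=
          ENNReal.rpow_le_rpow h2 hq0.le
      _ ≤ 2⁻¹ * (‖u - v‖₊ : ℝ≥0∞) ^ q + 2⁻¹ * (‖-u - v‖₊ : ℝ≥0∞) ^ q := by
          refine ENNReal.rpow_arith_mean_le_arith_mean2_rpow _ _ _ _ ?_ hq
          rw [← two_mul, ENNReal.mul_inv_cancel (by norm_num) (by norm_num)]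
  set M := max (∑' k, (‖x k - c k‖₊ : ℝ≥0∞) ^ q) (∑' k, (‖-x k - c k‖₊ : ℝ≥0∞) ^ q) with hM
  calc ∑' k, (‖x k‖₊ : ℝ≥0∞) ^ q
      ≤ ∑' k, (2⁻¹ * (‖x k - c k‖₊ : ℝ≥0∞) ^ q + 2⁻¹ * (‖-x k - c k‖₊ : ℝ≥0∞) ^ q) :=
        ENNReal.tsum_le_tsum fun k => point (x k) (c k)
    _ = 2⁻¹ * ∑' k, (‖x k - c k‖₊ : ℝ≥0∞) ^ q + 2⁻¹ * ∑' k, (‖-x k - c k‖₊ : ℝ≥0∞) ^ q := by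
        rw [ENNReal.tsum_add, ENNReal.tsum_mul_left, ENNReal.tsum_mul_left]
    _ ≤ 2⁻¹ * M + 2⁻¹ * M := by
        gcongr
        · exact le_max_left _ _
        · exact le_max_right _ _
    _ = M := by
        rw [← add_mul, ← two_mul, ENNReal.mul_inv_cancel (by norm_num) (by norm_num), one_mul]

private lemma lower_bound {n : ℕ} {q : ℝ} (hq : 1 ≤ q) (W : Set (ℕ → ℂ))
    (I : (ℕ → ℂ) → Set (Fin n → ℂ)) (xs : ℕ → ℂ)
    (hxW : xs ∈ W) (hxWn : (fun k => -xs k) ∈ W)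
    (hxI : (0 : Fin n → ℂ) ∈ I xs) (hxIn : (0 : Fin n → ℂ) ∈ I (fun k => -xs k))
    (Φ : (Fin n → ℂ) → ℕ → ℂ) :
    (∑' k, (‖xs k‖₊ : ℝ≥0∞) ^ q) ^ (1 / q) ≤ recErr q W I Φ := by
  have hq0 : (0:ℝ) < q := lt_of_lt_of_le one_pos hq
  have h1q : (0:ℝ) ≤ 1 / q := (one_div_pos.mpr hq0).le
  have h := lower_max hq xs (Φ 0)
  unfold recErr
  rcases le_total (∑' k, (‖xs k - Φ 0 k‖₊ : ℝ≥0∞) ^ q)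
      (∑' k, (‖-xs k - Φ 0 k‖₊ : ℝ≥0∞) ^ q) with hc | hc
  · have hS := h.trans (max_le hc le_rfl)
    refine le_trans (ENNReal.rpow_le_rpow hS h1q) ?_
    exact le_iSup₂_of_le _ hxWn (le_iSup₂_of_le 0 hxIn le_rfl)
  · have hS := h.trans (max_le le_rfl hc)
    refine le_trans (ENNReal.rpow_le_rpow hS h1q) ?_
    exact le_iSup₂_of_le _ hxW (le_iSup₂_of_le 0 hxI le_rfl)

private lemma assemble {Z : Type*} (q : ℝ) (W : Set (ℕ → ℂ)) (I : (ℕ → ℂ) → Set Z)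
    (Φs : Z → ℕ → ℂ) (V : ℝ≥0∞)
    (hub : ∀ x ∈ W, ∀ a ∈ I x, lqNorm q (fun k => x k - Φs a k) ≤ V)
    (hlow : ∀ Φ : Z → ℕ → ℂ, V ≤ recErr q W I Φ) :
    optErr q W I = recErr q W I Φs ∧ recErr q W I Φs = V := by
  have h1 : recErr q W I Φs ≤ V := by
    unfold recErr
    exact iSup₂_le fun x hx => iSup₂_le fun a ha => hub x hx a ha
  have h2 : recErr q W I Φs = V := le_antisymm h1 (hlow Φs)
  refine ⟨le_antisymm ?_ ?_, h2⟩
  · exact iInf_le _ _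
  · exact le_iInf fun Φ => h2.le.trans (hlow Φ)

private lemma upper_case1 {n : ℕ} {q p : ℝ} (hq : 1 ≤ q) (hp : 0 < p) (hpq : p ≤ q)
    {t : ℕ → ℝ} (htpos : ∀ k, 0 < t k) (htmono : Antitone t)
    {ε : ℝ} (hε : 0 ≤ ε) {x : ℕ → ℂ} (hx : x ∈ WT q t) {a : Fin n → ℂ}
    (ha : a ∈ infoLp n p ε x) :
    ∑' k, (‖x k - PhiStar q t n n a k‖₊ : ℝ≥0∞) ^ q
      ≤ ENNReal.ofReal (t n ^ q + ε ^ q * (1 - t n ^ q / t 0 ^ q)) := by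
  classical
  have hq0 : (0:ℝ) < q := lt_of_lt_of_le one_pos hq
  obtain ⟨h, hxh, hh⟩ := hx
  have hS : ∑' k, (‖h k‖₊ : ℝ≥0∞) ^ q ≤ 1 := lq_le_one hq0 hh
  have ht0q : (0:ℝ) < t 0 ^ q := Real.rpow_pos_of_pos (htpos 0) q
  have hα0 : (0:ℝ) ≤ 1 - t n ^ q / t 0 ^ q := by
    rw [sub_nonneg, div_le_one ht0q]
    exact Real.rpow_le_rpow (htpos n).le (htmono (Nat.zero_le n)) hq0.le
  set C : ℕ → ℝ≥0∞ :=
    fun k => if hk : k < n then (‖x k - a ⟨k, hk⟩‖₊ : ℝ≥0∞) ^ q else 0 with hCdef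
  set H : ℕ → ℝ≥0∞ := fun k => (‖h k‖₊ : ℝ≥0∞) ^ q with hHdef
  have point : ∀ k, (‖x k - PhiStar q t n n a k‖₊ : ℝ≥0∞) ^ q
      ≤ ENNReal.ofReal (1 - t n ^ q / t 0 ^ q) * C k + ENNReal.ofReal (t n ^ q) * H k := by
    intro k
    by_cases hk : k < n
    · have hPhi : PhiStar q t n n a k = ((1 - t n ^ q / t k ^ q : ℝ) : ℂ) * a ⟨k, hk⟩ := by
        unfold PhiStar
        rw [dif_pos ⟨hk, hk⟩]
      have hCk : C k = (‖x k - a ⟨k, hk⟩‖₊ : ℝ≥0∞) ^ q := by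
        simp only [hCdef]
        rw [dif_pos hk]
      rw [hPhi, hCk, hHdef]
      have hb := pointwise_bound hq (htpos n) (htmono hk.le) (htmono (Nat.zero_le k))
        (x k) (a ⟨k, hk⟩)
      have hx2 : (t n ^ q / t k ^ q).toNNReal * ‖x k‖₊ ^ q
          = (t n ^ q).toNNReal * ‖h k‖₊ ^ q := by
        rw [hxh k, nnnorm_mul, nnnorm_real_coe (htpos k).le, NNReal.mul_rpow, ← mul_assoc]
        congr 1
        apply NNReal.coe_injective
        have htkq : (0:ℝ) < t k ^ q := Real.rpow_pos_of_pos (htpos k) q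
        push_cast [Real.coe_toNNReal _ (le_of_lt (div_pos (Real.rpow_pos_of_pos (htpos n) q) htkq)),
          Real.coe_toNNReal _ (Real.rpow_nonneg (htpos n).le q),
          Real.coe_toNNReal _ (htpos k).le]
        exact div_mul_cancel₀ _ htkq.ne'
      have hb2 := hb.trans_eq (by rw [hx2])
      calc (‖x k - ((1 - t n ^ q / t k ^ q : ℝ) : ℂ) * a ⟨k, hk⟩‖₊ : ℝ≥0∞) ^ q
          = ((‖x k - ((1 - t n ^ q / t k ^ q : ℝ) : ℂ) * a ⟨k, hk⟩‖₊ ^ q : ℝ≥0) : ℝ≥0∞) :=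
            (ENNReal.coe_rpow_of_nonneg _ hq0.le).symm
        _ ≤ (((1 - t n ^ q / t 0 ^ q).toNNReal * ‖x k - a ⟨k, hk⟩‖₊ ^ q
              + (t n ^ q).toNNReal * ‖h k‖₊ ^ q : ℝ≥0) : ℝ≥0∞) := ENNReal.coe_le_coe.mpr hb2
        _ = ENNReal.ofReal (1 - t n ^ q / t 0 ^ q) * (‖x k - a ⟨k, hk⟩‖₊ : ℝ≥0∞) ^ q
              + ENNReal.ofReal (t n ^ q) * (‖h k‖₊ : ℝ≥0∞) ^ q := by
            push_cast [ENNReal.coe_rpow_of_nonneg _ hq0.le]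
            rfl
    · have hPhi : PhiStar q t n n a k = 0 := by
        unfold PhiStar
        exact dif_neg fun hc => hk hc.1
      have hCk : C k = 0 := by
        simp only [hCdef]
        rw [dif_neg hk]
      rw [hPhi, hCk, hHdef, mul_zero, zero_add, sub_zero, hxh k,
        nnnorm_mul_coord hq0 (htpos k).le]
      exact mul_le_mul_left (ENNReal.ofReal_le_ofReal
        (Real.rpow_le_rpow (htpos k).le (htmono (not_lt.mp hk)) hq0.le)) _
  have hCsum : ∑' k, C k ≤ ENNReal.ofReal (ε ^ q) := by
    have h1 : ∑' k, C k = ∑ k : Fin n, ((‖x (k : ℕ) - a k‖₊ ^ q : ℝ≥0) : ℝ≥0∞) := by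
      rw [tsum_eq_sum (s := Finset.range n)
        (fun b hb => by
          simp only [hCdef]
          exact dif_neg fun hc => hb (Finset.mem_range.mpr hc)),
        ← Fin.sum_univ_eq_sum_range (fun k => C k) n]
      refine Finset.sum_congr rfl fun k _ => ?_
      simp only [hCdef]
      rw [dif_pos k.isLt, ← ENNReal.coe_rpow_of_nonneg _ hq0.le]
    rw [h1, ← ENNReal.coe_finset_sum]
    calc ((∑ k : Fin n, ‖x (k : ℕ) - a k‖₊ ^ q : ℝ≥0) : ℝ≥0∞)
        ≤ ((ε.toNNReal ^ q : ℝ≥0) : ℝ≥0∞) :=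
          ENNReal.coe_le_coe.mpr (info_sum_q hp hpq hε ha)
      _ = ENNReal.ofReal (ε ^ q) := by rw [toNNReal_rpow hε]; rfl
  calc ∑' k, (‖x k - PhiStar q t n n a k‖₊ : ℝ≥0∞) ^ q
      ≤ ∑' k, (ENNReal.ofReal (1 - t n ^ q / t 0 ^ q) * C k + ENNReal.ofReal (t n ^ q) * H k) :=
        ENNReal.tsum_le_tsum point
    _ = ENNReal.ofReal (1 - t n ^ q / t 0 ^ q) * ∑' k, C k
          + ENNReal.ofReal (t n ^ q) * ∑' k, H k := by
        rw [ENNReal.tsum_add, ENNReal.tsum_mul_left, ENNReal.tsum_mul_left]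
    _ ≤ ENNReal.ofReal (1 - t n ^ q / t 0 ^ q) * ENNReal.ofReal (ε ^ q)
          + ENNReal.ofReal (t n ^ q) * 1 := by
        gcongr
    _ = ENNReal.ofReal (t n ^ q + ε ^ q * (1 - t n ^ q / t 0 ^ q)) := by
        rw [mul_one, ← ENNReal.ofReal_mul hα0,
          ← ENNReal.ofReal_add (mul_nonneg hα0 (Real.rpow_nonneg hε q)) (Real.rpow_nonneg (htpos n).le q)]
        congr 1
        ring

private lemma upper_S_x {q : ℝ} (hq : 1 ≤ q) {t : ℕ → ℝ} (htpos : ∀ k, 0 < t k)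
    (htmono : Antitone t) {x : ℕ → ℂ} (hx : x ∈ WT q t) :
    ∑' k, (‖x k‖₊ : ℝ≥0∞) ^ q ≤ ENNReal.ofReal (t 0 ^ q) := by
  obtain ⟨h, hxh, hh⟩ := hx
  have hq0 : (0:ℝ) < q := lt_of_lt_of_le one_pos hq
  have hS : ∑' k, (‖h k‖₊ : ℝ≥0∞) ^ q ≤ 1 := lq_le_one hq0 hh
  calc ∑' k, (‖x k‖₊ : ℝ≥0∞) ^ q
      ≤ ∑' k, ENNReal.ofReal (t 0 ^ q) * (‖h k‖₊ : ℝ≥0∞) ^ q := by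
        refine ENNReal.tsum_le_tsum fun k => ?_
        rw [hxh k, nnnorm_mul_coord hq0 (htpos k).le]
        exact mul_le_mul_left (ENNReal.ofReal_le_ofReal
          (Real.rpow_le_rpow (htpos k).le (htmono (Nat.zero_le k)) hq0.le)) _
    _ = ENNReal.ofReal (t 0 ^ q) * ∑' k, (‖h k‖₊ : ℝ≥0∞) ^ q := ENNReal.tsum_mul_left
    _ ≤ ENNReal.ofReal (t 0 ^ q) * 1 := by gcongr
    _ = _ := mul_one _

/-- Theorem 3: optimal recovery of `W^T_q` from the first `n` coordinates
known with an error measured in `ℓ^n_p`, `0 < p ≤ q`. -/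
theorem optimal_recovery_lp_error_small_p
    (n : ℕ) (hn : 1 ≤ n) (q : ℝ) (hq : 1 ≤ q) (p : ℝ) (hp : 0 < p) (hpq : p ≤ q)
    (t : ℕ → ℝ) (htpos : ∀ k, 0 < t k) (htmono : Antitone t)
    (ε : ℝ) (hε : 0 ≤ ε) :
    (ε ≤ t 0 →
      optErr q (WT q t) (infoLp n p ε) =
        recErr q (WT q t) (infoLp n p ε) (PhiStar q t n n) ∧
      recErr q (WT q t) (infoLp n p ε) (PhiStar q t n n) =
        ENNReal.ofReal ((t n ^ q + ε ^ q * (1 - t n ^ q / t 0 ^ q)) ^ (1 / q))) ∧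
    (t 0 < ε →
      optErr q (WT q t) (infoLp n p ε) =
        recErr q (WT q t) (infoLp n p ε) (PhiStar q t n 0) ∧
      recErr q (WT q t) (infoLp n p ε) (PhiStar q t n 0) = ENNReal.ofReal (t 0)) := by
  have hq0 : (0:ℝ) < q := lt_of_lt_of_le one_pos hq
  have hq0' : q ≠ 0 := hq0.ne'
  have h1q : (0:ℝ) < 1 / q := one_div_pos.mpr hq0
  have ht0 := htpos 0
  have htn := htpos n
  have ht0q : (0:ℝ) < t 0 ^ q := Real.rpow_pos_of_pos ht0 q
  have htnq : (0:ℝ) < t n ^ q := Real.rpow_pos_of_pos htn q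
  have hn0 : n ≠ 0 := by omega
  constructor
  · -- CASE 1 : ε ≤ t 0
    intro hεt
    have hα0 : (0:ℝ) ≤ 1 - t n ^ q / t 0 ^ q := by
      rw [sub_nonneg, div_le_one ht0q]
      exact Real.rpow_le_rpow htn.le (htmono (Nat.zero_le n)) hq0.le
    have hT0 : (0:ℝ) ≤ t n ^ q + ε ^ q * (1 - t n ^ q / t 0 ^ q) :=
      add_nonneg htnq.le (mul_nonneg (Real.rpow_nonneg hε q) hα0)
    have hβ0 : (0:ℝ) ≤ 1 - ε ^ q / t 0 ^ q := by
      rw [sub_nonneg, div_le_one ht0q]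
      exact Real.rpow_le_rpow hε hεt hq0.le
    have hV1 : ENNReal.ofReal ((t n ^ q + ε ^ q * (1 - t n ^ q / t 0 ^ q)) ^ (1 / q))
        = (ENNReal.ofReal (t n ^ q + ε ^ q * (1 - t n ^ q / t 0 ^ q))) ^ (1 / q) :=
      (ENNReal.ofReal_rpow_of_nonneg hT0 h1q.le).symm
    set xs : ℕ → ℂ := fun k => if k = 0 then ((ε : ℝ) : ℂ)
      else if k = n then ((t n * (1 - ε ^ q / t 0 ^ q) ^ (1 / q) : ℝ) : ℂ) else 0 with hxsdef
    have hxs0 : xs 0 = ((ε : ℝ) : ℂ) := by simp [hxsdef]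
    have hxsn : xs n = ((t n * (1 - ε ^ q / t 0 ^ q) ^ (1 / q) : ℝ) : ℂ) := by
      simp [hxsdef, hn0]
    have hxsk : ∀ k, k ≠ 0 → k ≠ n → xs k = 0 := fun k h1 h2 => by simp [hxsdef, h1, h2]
    have hroot : (((1 - ε ^ q / t 0 ^ q) ^ (1 / q) : ℝ)) ^ q = 1 - ε ^ q / t 0 ^ q := by
      rw [← Real.rpow_mul hβ0, one_div_mul_cancel hq0', Real.rpow_one]
    have hrootn : (0:ℝ) ≤ (1 - ε ^ q / t 0 ^ q) ^ (1 / q) := Real.rpow_nonneg hβ0 _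
    have hxsW : xs ∈ WT q t := by
      refine ⟨fun k => if k = 0 then ((ε / t 0 : ℝ) : ℂ)
        else if k = n then (((1 - ε ^ q / t 0 ^ q) ^ (1 / q) : ℝ) : ℂ) else 0, fun k => ?_, ?_⟩
      · by_cases h1 : k = 0
        · subst h1
          rw [hxs0]
          simp only [if_pos rfl]
          push_cast
          field_simp [Complex.ofReal_ne_zero.mpr ht0.ne']
        · by_cases h2 : k = n
          · subst h2
            rw [hxsn]
            simp only [if_neg h1, if_pos rfl]
            push_cast
            ring
          · rw [hxsk k h1 h2]
            simp [h1, h2]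
      · rw [lqNorm]
        have hsum : ∑' k, (‖(if k = 0 then ((ε / t 0 : ℝ) : ℂ)
            else if k = n then (((1 - ε ^ q / t 0 ^ q) ^ (1 / q) : ℝ) : ℂ) else 0)‖₊ : ℝ≥0∞) ^ q
            = 1 := by
          rw [tsum_support_pair (by omega : 0 < n) (fun k h1 h2 => by
            simp [h1, h2, ENNReal.zero_rpow_of_pos hq0])]
          rw [if_pos rfl, if_neg hn0, if_pos rfl]
          rw [enorm_real_rpow hq0 (by positivity), enorm_real_rpow hq0 hrootn, hroot,
            Real.div_rpow hε ht0.le, ← ENNReal.ofReal_add (by positivity) hβ0,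
            show ε ^ q / t 0 ^ q + (1 - ε ^ q / t 0 ^ q) = 1 from by ring, ENNReal.ofReal_one]
        rw [hsum, ENNReal.one_rpow]
    have hSxs : ∑' k, (‖xs k‖₊ : ℝ≥0∞) ^ q
        = ENNReal.ofReal (t n ^ q + ε ^ q * (1 - t n ^ q / t 0 ^ q)) := by
      rw [tsum_support_pair (by omega : 0 < n) (fun k h1 h2 => by
        rw [hxsk k h1 h2]; simp [ENNReal.zero_rpow_of_pos hq0])]
      rw [hxs0, hxsn, enorm_real_rpow hq0 hε,
        enorm_real_rpow hq0 (mul_nonneg htn.le hrootn),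
        Real.mul_rpow htn.le hrootn, hroot,
        ← ENNReal.ofReal_add (Real.rpow_nonneg hε q) (mul_nonneg htnq.le hβ0)]
      congr 1
      field_simp
      ring
    have hxsI : (0 : Fin n → ℂ) ∈ infoLp n p ε xs :=
      zero_mem_info hn hp hε
        (by rw [hxs0, Complex.norm_real, Real.norm_eq_abs, abs_of_nonneg hε])
        (fun k hk1 hk2 => hxsk k (by omega) (by omega))
    have hxsIn : (0 : Fin n → ℂ) ∈ infoLp n p ε (fun k => -xs k) :=
      zero_mem_info hn hp hε
        (by show ‖-xs 0‖ ≤ ε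
            rw [norm_neg, hxs0, Complex.norm_real, Real.norm_eq_abs, abs_of_nonneg hε])
        (fun k hk1 hk2 => by
          show -xs k = 0
          rw [hxsk k (by omega) (by omega), neg_zero])
    refine assemble q (WT q t) (infoLp n p ε) (PhiStar q t n n) _ ?_ ?_
    · intro x hx a ha
      rw [lqNorm, hV1]
      exact ENNReal.rpow_le_rpow (upper_case1 hq hp hpq htpos htmono hε hx ha) h1q.le
    · intro Φ
      rw [hV1]
      have hlb := lower_bound hq (WT q t) (infoLp n p ε) xs hxsW (WT_neg hxsW) hxsI hxsIn Φ
      rwa [hSxs] at hlb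
  · -- CASE 2 : t 0 < ε
    intro hεt
    have ht0' : ((t 0 ^ q) ^ (1 / q) : ℝ) = t 0 := by
      rw [← Real.rpow_mul ht0.le, mul_one_div_cancel hq0', Real.rpow_one]
    have hV : ENNReal.ofReal (t 0) = (ENNReal.ofReal (t 0 ^ q)) ^ (1 / q) := by
      rw [ENNReal.ofReal_rpow_of_nonneg ht0q.le h1q.le, ht0']
    have hPhi0 : ∀ (a : Fin n → ℂ) (k : ℕ), PhiStar q t n 0 a k = 0 := fun a k => by
      unfold PhiStar
      exact dif_neg fun hc => Nat.not_lt_zero k hc.2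
    set xs : ℕ → ℂ := fun k => if k = 0 then ((t 0 : ℝ) : ℂ) else 0 with hxsdef
    have hxs0 : xs 0 = ((t 0 : ℝ) : ℂ) := by simp [hxsdef]
    have hxsk : ∀ k, k ≠ 0 → xs k = 0 := fun k h1 => by simp [hxsdef, h1]
    have hxsW : xs ∈ WT q t := by
      refine ⟨fun k => if k = 0 then 1 else 0, fun k => ?_, ?_⟩
      · by_cases h1 : k = 0
        · subst h1
          simp [hxsdef]
        · simp [hxsdef, h1]
      · rw [lqNorm]
        have hsum : ∑' k, (‖(if k = 0 then (1:ℂ) else 0)‖₊ : ℝ≥0∞) ^ q = 1 := by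
          rw [tsum_support_single (fun k h1 => by
            simp [h1, ENNReal.zero_rpow_of_pos hq0])]
          simp
        rw [hsum, ENNReal.one_rpow]
    have hSxs : ∑' k, (‖xs k‖₊ : ℝ≥0∞) ^ q = ENNReal.ofReal (t 0 ^ q) := by
      rw [tsum_support_single (fun k h1 => by
        rw [hxsk k h1]; simp [ENNReal.zero_rpow_of_pos hq0])]
      rw [hxs0, enorm_real_rpow hq0 ht0.le]
    have hxsI : (0 : Fin n → ℂ) ∈ infoLp n p ε xs :=
      zero_mem_info hn hp hε
        (by rw [hxs0, Complex.norm_real, Real.norm_eq_abs, abs_of_nonneg ht0.le]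
            exact hεt.le)
        (fun k hk1 hk2 => hxsk k (by omega))
    have hxsIn : (0 : Fin n → ℂ) ∈ infoLp n p ε (fun k => -xs k) :=
      zero_mem_info hn hp hε
        (by show ‖-xs 0‖ ≤ ε
            rw [norm_neg, hxs0, Complex.norm_real, Real.norm_eq_abs, abs_of_nonneg ht0.le]
            exact hεt.le)
        (fun k hk1 hk2 => by
          show -xs k = 0
          rw [hxsk k (by omega), neg_zero])
    refine assemble q (WT q t) (infoLp n p ε) (PhiStar q t n 0) _ ?_ ?_
    · intro x hx a ha
      have heq : lqNorm q (fun k => x k - PhiStar q t n 0 a k) = lqNorm q x := by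
        simp [lqNorm, hPhi0]
      rw [heq, lqNorm, hV]
      exact ENNReal.rpow_le_rpow (upper_S_x hq htpos htmono hx) h1q.le
    · intro Φ
      rw [hV]
      have hlb := lower_bound hq (WT q t) (infoLp n p ε) xs hxsW (WT_neg hxsW) hxsI hxsIn Φ
      rwa [hSxs] at hlb
end

section
/- Let 1 ≤ q < p < ∞, n ∈ ℕ, and let t = (t_k) be a strictly decreasing sequence of positive reals. For m = 1,…,n define δ_{j,m} = (1 − t_{m+1}^q/t_j^q)^{p/(p−q)} for j = 1,…,m, and set c₁ = t₁ and, for m ≥ 2, c_m = ( Σ_{j=1}^{m} δ_{j,m} )^{1/p} · ( Σ_{j=1}^{m} δ_{j,m}^{q/p}/t_j^q )^{−1/q}. Then the finite sequence c₁ ≥ c₂ ≥ … ≥ c_n is non-increasing. -/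
open scoped BigOperators

/-- The constants `c_m`: `c₁ = t₁` and, for `m ≥ 2`,
`c_m = (∑_{j=1}^m δ_{j,m})^{1/p} · (∑_{j=1}^m δ_{j,m}^{q/p}/t_j^q)^{−1/q}`, where
`δ_{j,m} = (1 − t_{m+1}^q/t_j^q)^{p/(p−q)}` (0-based indexing: `t k` is the paper's
`t_{k+1}`). -/
noncomputable def cSeq (p q : ℝ) (t : ℕ → ℝ) : ℕ → ℝ := fun m =>
  if m = 1 then t 0 else
    (∑ j ∈ Finset.range m, (1 - t m ^ q / t j ^ q) ^ (p / (p - q))) ^ (1 / p) *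
    (∑ j ∈ Finset.range m, ((1 - t m ^ q / t j ^ q) ^ (p / (p - q))) ^ (q / p) / t j ^ q)
      ^ (-(1 / q))

/-!
Write `α = p/(p-q)`, `T_j = t_j^q`, and replace `t_{m+1}^q` in the formula for `c_m` by a
parameter `u`. Since `1/α - 1 = -q/p` and `α q/p = α - 1`, the result is `F'(-u)^(-1/q)`, where
`F d = (∑_j (1 + d/T_j)^α)^(1/α)` is the `ℓ^α` norm of a point moving along a line, hence convex.
So `F'` is nondecreasing, and the formula for `c_{m+1}` is nondecreasing in `u ≤ T_{m+1}`. Moving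
`u` from `T_{m+2}` (giving `c_{m+1}`) up to `T_{m+1}` kills the summand `j = m+1`, which leaves
the formula for `c_m`; for `m = 1` that formula collapses to `t_1 = c_1`.
-/

open Finset Set

section

variable {ι : Type*} (s : Finset ι) (a b : ι → ℝ) {r : ℝ}

theorem convexOn_sum_abs_rpow_rpow_inv (hr : 1 ≤ r) :
    ConvexOn ℝ univ fun u => (∑ i ∈ s, |a i + u * b i| ^ r) ^ (1 / r) := by
  have : Fact (1 ≤ ENNReal.ofReal r) := ⟨by simpa using ENNReal.ofReal_le_ofReal hr⟩
  have hr' : (ENNReal.ofReal r).toReal = r := ENNReal.toReal_ofReal (by linarith)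
  let v : ℝ →ᵃ[ℝ] PiLp (ENNReal.ofReal r) (fun _ : s => ℝ) :=
    AffineMap.lineMap (WithLp.toLp _ fun i => a i) (WithLp.toLp _ fun i => a i + b i)
  have hv : (fun u => (∑ i ∈ s, |a i + u * b i| ^ r) ^ (1 / r)) = norm ∘ v := by
    funext u
    rw [Function.comp_apply, PiLp.norm_eq_sum (by linarith), hr', ← s.sum_attach]
    simp [v, AffineMap.lineMap_apply, add_comm]
  rw [hv]
  simpa using (convexOn_norm convex_univ).comp_affineMap v

theorem hasDerivAt_sum_rpow_rpow_inv (hr : 1 ≤ r) {u : ℝ}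
    (hA : 0 < ∑ i ∈ s, (a i + u * b i) ^ r) :
    HasDerivAt (fun u => (∑ i ∈ s, (a i + u * b i) ^ r) ^ (1 / r))
      ((∑ i ∈ s, (a i + u * b i) ^ r) ^ (1 / r - 1) *
        ∑ i ∈ s, (a i + u * b i) ^ (r - 1) * b i) u := by
  have hsum : HasDerivAt (fun u => ∑ i ∈ s, (a i + u * b i) ^ r)
      (∑ i ∈ s, b i * r * (a i + u * b i) ^ (r - 1)) u :=
    HasDerivAt.fun_sum fun i _ =>
      ((hasDerivAt_mul_const (b i)).const_add (a i)).rpow_const (Or.inr hr)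
  convert hsum.rpow_const (p := 1 / r) (Or.inl hA.ne') using 1
  rw [Finset.mul_sum, Finset.sum_mul, Finset.sum_mul]
  refine sum_congr rfl fun i _ => ?_
  field_simp

theorem sum_rpow_rpow_inv_deriv_le (hr : 1 ≤ r) {u v : ℝ} (huv : u < v)
    (hu : ∀ i ∈ s, 0 ≤ a i + u * b i) (hv : ∀ i ∈ s, 0 ≤ a i + v * b i)
    (hAu : 0 < ∑ i ∈ s, (a i + u * b i) ^ r) (hAv : 0 < ∑ i ∈ s, (a i + v * b i) ^ r) :
    (∑ i ∈ s, (a i + u * b i) ^ r) ^ (1 / r - 1) * ∑ i ∈ s, (a i + u * b i) ^ (r - 1) * b i ≤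
      (∑ i ∈ s, (a i + v * b i) ^ r) ^ (1 / r - 1) *
        ∑ i ∈ s, (a i + v * b i) ^ (r - 1) * b i := by
  have hconv : ConvexOn ℝ (Icc u v) fun u => (∑ i ∈ s, (a i + u * b i) ^ r) ^ (1 / r) := by
    refine ((convexOn_sum_abs_rpow_rpow_inv s a b hr).subset (subset_univ _)
      (convex_Icc u v)).congr fun d hd => ?_
    refine congrArg (· ^ (1 / r)) (sum_congr rfl fun i hi => ?_)
    rw [abs_of_nonneg]
    rcases le_total 0 (b i) with hb | hb <;> nlinarith [hu i hi, hv i hi, hd.1, hd.2]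
  have hu_mem := Set.left_mem_Icc.2 huv.le
  have hv_mem := Set.right_mem_Icc.2 huv.le
  exact (hconv.le_slope_of_hasDerivAt hu_mem hv_mem huv
    (hasDerivAt_sum_rpow_rpow_inv s a b hr hAu)).trans
    (hconv.slope_le_of_hasDerivAt hu_mem hv_mem huv (hasDerivAt_sum_rpow_rpow_inv s a b hr hAv))

end

-- The formula defining `cSeq p q t N` for `N ≠ 1`, with `t N ^ q` replaced by a parameter `u`.
noncomputable def cFormula (p q : ℝ) (t : ℕ → ℝ) (N : ℕ) (u : ℝ) : ℝ :=
  (∑ j ∈ range N, (1 - u / t j ^ q) ^ (p / (p - q))) ^ (1 / p) *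
    (∑ j ∈ range N, ((1 - u / t j ^ q) ^ (p / (p - q))) ^ (q / p) / t j ^ q) ^ (-(1 / q))

section

variable {p q : ℝ} {t : ℕ → ℝ}

theorem cFormula_one (hq : 0 < q) (hqp : q < p) (ht0 : 0 < t 0) {u : ℝ} (hu : u < t 0 ^ q) :
    cFormula p q t 1 u = t 0 := by
  have hT0 : 0 < t 0 ^ q := Real.rpow_pos_of_pos ht0 q
  have hx : 0 < 1 - u / t 0 ^ q := sub_pos.2 ((div_lt_one hT0).2 hu)
  have hexp : p / (p - q) * (1 / p) + p / (p - q) * (q / p) * -(1 / q) = 0 := by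
    have : p - q ≠ 0 := by linarith
    field_simp
    ring
  rw [cFormula, sum_range_one, sum_range_one, ← Real.rpow_mul hx.le, ← Real.rpow_mul hx.le,
    Real.div_rpow (Real.rpow_nonneg hx.le _) hT0.le, ← Real.rpow_mul hx.le,
    ← Real.rpow_mul ht0.le, show q * -(1 / q) = -1 by field_simp, Real.rpow_neg_one,
    div_inv_eq_mul, ← mul_assoc, ← Real.rpow_add hx, hexp, Real.rpow_zero, one_mul]

theorem cFormula_succ_self (hq : 0 < q) (hqp : q < p) {N : ℕ} (htN : 0 < t N) :
    cFormula p q t (N + 1) (t N ^ q) = cFormula p q t N (t N ^ q) := by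
  have hα : p / (p - q) ≠ 0 := (div_pos (by linarith) (by linarith)).ne'
  have hqp' : q / p ≠ 0 := (div_pos hq (by linarith)).ne'
  simp only [cFormula, sum_range_succ, div_self (Real.rpow_pos_of_pos htN q).ne', sub_self,
    Real.zero_rpow hα, Real.zero_rpow hqp', zero_div, add_zero]

theorem cFormula_eq_rpow (hq : 0 < q) (hqp : q < p) {N : ℕ} {u : ℝ}
    (hT : ∀ j < N, 0 < t j) (hu : ∀ j < N, u ≤ t j ^ q)
    (hA : 0 < ∑ j ∈ range N, (1 + -u * (t j ^ q)⁻¹) ^ (p / (p - q)))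
    (hB : 0 ≤ ∑ j ∈ range N, (1 + -u * (t j ^ q)⁻¹) ^ (p / (p - q) - 1) * (t j ^ q)⁻¹) :
    cFormula p q t N u =
      ((∑ j ∈ range N, (1 + -u * (t j ^ q)⁻¹) ^ (p / (p - q))) ^ (1 / (p / (p - q)) - 1) *
        ∑ j ∈ range N, (1 + -u * (t j ^ q)⁻¹) ^ (p / (p - q) - 1) * (t j ^ q)⁻¹) ^ (-(1 / q)) := by
  have hpq : p - q ≠ 0 := by linarith
  have hp : p ≠ 0 := by linarith
  have hbase : ∀ j, 1 - u / t j ^ q = 1 + -u * (t j ^ q)⁻¹ := fun j => by ring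
  have hα : p / (p - q) * (q / p) = p / (p - q) - 1 := by field_simp; ring
  have hsum : ∑ j ∈ range N, ((1 - u / t j ^ q) ^ (p / (p - q))) ^ (q / p) / t j ^ q =
      ∑ j ∈ range N, (1 + -u * (t j ^ q)⁻¹) ^ (p / (p - q) - 1) * (t j ^ q)⁻¹ := by
    refine sum_congr rfl fun j hj => ?_
    have hTj := Real.rpow_pos_of_pos (hT j (mem_range.1 hj)) q
    have hx : 0 ≤ 1 - u / t j ^ q := sub_nonneg.2 ((div_le_one hTj).2 (hu j (mem_range.1 hj)))
    rw [← Real.rpow_mul hx, hα, div_eq_mul_inv, hbase]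
  rw [cFormula, hsum, Real.mul_rpow (Real.rpow_nonneg hA.le _) hB, ← Real.rpow_mul hA.le]
  simp only [hbase]
  congr 2
  field_simp
  ring

theorem cFormula_le_of_lt (hq : 0 < q) (hqp : q < p) {N : ℕ} (hN : 0 < N)
    (hT : ∀ j < N, 0 < t j) {u v : ℝ} (huv : u < v) (hv : ∀ j < N, v ≤ t j ^ q)
    (hv0 : v < t 0 ^ q) :
    cFormula p q t N u ≤ cFormula p q t N v := by
  have hα : 1 ≤ p / (p - q) := by rw [le_div_iff₀ (by linarith)]; linarith
  have hbase : ∀ w ≤ v, ∀ j ∈ range N, 0 ≤ 1 + -w * (t j ^ q)⁻¹ := fun w hw j hj => by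
    have hTj := Real.rpow_pos_of_pos (hT j (mem_range.1 hj)) q
    have : w * (t j ^ q)⁻¹ ≤ 1 := by
      rw [← div_eq_mul_inv, div_le_one hTj]; exact hw.trans (hv j (mem_range.1 hj))
    linarith
  have hbase0 : ∀ w ≤ v, 0 < 1 + -w * (t 0 ^ q)⁻¹ := fun w hw => by
    have hT0 := Real.rpow_pos_of_pos (hT 0 hN) q
    have : w * (t 0 ^ q)⁻¹ < 1 := by rw [← div_eq_mul_inv, div_lt_one hT0]; linarith
    linarith
  have h0 : 0 ∈ range N := mem_range.2 hN
  have hA : ∀ w ≤ v, 0 < ∑ j ∈ range N, (1 + -w * (t j ^ q)⁻¹) ^ (p / (p - q)) :=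
    fun w hw => sum_pos' (fun j hj => Real.rpow_nonneg (hbase w hw j hj) _)
      ⟨0, h0, Real.rpow_pos_of_pos (hbase0 w hw) _⟩
  have hB : ∀ w ≤ v,
      0 < ∑ j ∈ range N, (1 + -w * (t j ^ q)⁻¹) ^ (p / (p - q) - 1) * (t j ^ q)⁻¹ :=
    fun w hw => sum_pos'
      (fun j hj => mul_nonneg (Real.rpow_nonneg (hbase w hw j hj) _)
        (inv_nonneg.2 (Real.rpow_nonneg (hT j (mem_range.1 hj)).le q)))
      ⟨0, h0, mul_pos (Real.rpow_pos_of_pos (hbase0 w hw) _)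
        (inv_pos.2 (Real.rpow_pos_of_pos (hT 0 hN) q))⟩
  rw [cFormula_eq_rpow hq hqp hT (fun j hj => huv.le.trans (hv j hj)) (hA u huv.le)
      (hB u huv.le).le, cFormula_eq_rpow hq hqp hT hv (hA v le_rfl) (hB v le_rfl).le]
  refine Real.rpow_le_rpow_of_nonpos
    (mul_pos (Real.rpow_pos_of_pos (hA v le_rfl) _) (hB v le_rfl)) ?_ (by simp [hq.le])
  exact sum_rpow_rpow_inv_deriv_le (range N) (fun _ => 1) (fun j => (t j ^ q)⁻¹) hα
    (neg_lt_neg huv) (hbase v le_rfl) (hbase u huv.le) (hA v le_rfl) (hA u huv.le)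

theorem cSeq_eq_cFormula (hq : 0 < q) (hqp : q < p) (htpos : ∀ k, 0 < t k)
    (ht : StrictAnti t) {m : ℕ} (hm : 1 ≤ m) : cSeq p q t m = cFormula p q t m (t m ^ q) := by
  rcases hm.eq_or_lt with rfl | hm
  · exact (cFormula_one hq hqp (htpos 0)
      (Real.rpow_lt_rpow (htpos 1).le (ht zero_lt_one) hq)).symm
  · exact if_neg hm.ne'

end

/-- for `1 ≤ q < p < ∞` and a strictly decreasing positive sequence `t`,
the finite sequence `c₁ ≥ c₂ ≥ … ≥ c_n` is non-increasing. -/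
theorem cSeq_antitone (p q : ℝ) (hq : 1 ≤ q) (hqp : q < p)
    (t : ℕ → ℝ) (htpos : ∀ k, 0 < t k) (ht : StrictAnti t) (n : ℕ) :
    ∀ m, 1 ≤ m → m + 1 ≤ n → cSeq p q t (m + 1) ≤ cSeq p q t m := by
  intro m hm _
  have hq0 : 0 < q := zero_lt_one.trans_le hq
  have hT : StrictAnti fun k => t k ^ q :=
    fun i j hij => Real.rpow_lt_rpow (htpos j).le (ht hij) hq0
  rw [cSeq_eq_cFormula hq0 hqp htpos ht (by omega), cSeq_eq_cFormula hq0 hqp htpos ht hm,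
    ← cFormula_succ_self hq0 hqp (htpos m)]
  exact cFormula_le_of_lt hq0 hqp m.succ_pos (fun j _ => htpos j) (hT m.lt_succ_self)
    (fun j hj => hT.antitone (Nat.lt_succ_iff.1 hj)) (hT hm)
end

section
/- Let n ∈ ℕ, 1 < p < ∞, q = p/(p−1), and ε₁,…,ε_n ≥ 0. If 1 − Σ_{k=1}^{n} ε_k/(t_k s_k) ≥ 0 set m = n; otherwise choose m ∈ {0,1,…,n} such that 1 − Σ_{k=1}^{m} ε_k/(t_k s_k) ≥ 0 and 1 − Σ_{k=1}^{m} ε_k/(t_k s_k) − ε_{m+1}/(t_{m+1} s_{m+1}) < 0. Then E(A, W^{T,S}_{p,q}, J^n_{ε̄}) = E(A, W^{T,S}_{p,q}, J^n_{ε̄}, Ψ*_m) = t_{m+1} s_{m+1} + Σ_{k=1}^{m} ε_k (1 − t_{m+1} s_{m+1}/(t_k s_k)). -/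
open scoped ENNReal NNReal BigOperators

/-- The scalar product `A(x,y) = ⟨x,y⟩ = ∑_{k=1}^∞ x_k y_k`. -/
noncomputable def scalarProd (x y : ℕ → ℂ) : ℂ := ∑' k, x k * y k

/-- The error `E(A, W₁ × W₂, J, Ψ) = sup_{(x,y)} sup_{(a,b) ∈ J(x,y)} |⟨x,y⟩ − Ψ(a,b)|`
of a recovery method `Ψ` for the scalar product. -/
noncomputable def recErrSP {Z : Type*} (W₁ W₂ : Set (ℕ → ℂ))
    (J : (ℕ → ℂ) → (ℕ → ℂ) → Set Z) (Ψ : Z → ℂ) : ℝ≥0∞ :=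
  ⨆ x ∈ W₁, ⨆ y ∈ W₂, ⨆ ab ∈ J x y, (‖scalarProd x y - Ψ ab‖₊ : ℝ≥0∞)

/-- The error of optimal recovery `E(A, W₁ × W₂, J) = inf_Ψ E(A, W₁ × W₂, J, Ψ)`. -/
noncomputable def optErrSP {Z : Type*} (W₁ W₂ : Set (ℕ → ℂ))
    (J : (ℕ → ℂ) → (ℕ → ℂ) → Set Z) : ℝ≥0∞ :=
  ⨅ Ψ : Z → ℂ, recErrSP W₁ W₂ J Ψ

/-- The method `Ψ*_m(a,b) = ∑_{k=1}^m a_k b_k (1 − t_{m+1}s_{m+1}/(t_k s_k))`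
(0-based: `t m * s m` is the paper's `t_{m+1}s_{m+1}`); `PsiStar t s n 0 = Ψ*_0 = 0`. -/
noncomputable def PsiStar (t s : ℕ → ℝ) (n m : ℕ)
    (ab : (Fin n → ℂ) × (Fin n → ℂ)) : ℂ :=
  ∑ k : Fin n, if (k : ℕ) < m then
    ab.1 k * ab.2 k * ((1 - t m * s m / (t (k : ℕ) * s (k : ℕ)) : ℝ) : ℂ) else 0

/-- The information mapping
`J^n_{ε̄}(x,y) = {(a,b) ∈ ℂⁿ × ℂⁿ : |x_k y_k − a_k b_k| ≤ ε_k, k = 1,…,n}`. -/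
def infoProdCoord (n : ℕ) (ε : ℕ → ℝ) (x y : ℕ → ℂ) : Set ((Fin n → ℂ) × (Fin n → ℂ)) :=
  {ab | ∀ k : Fin n, ‖x (k : ℕ) * y (k : ℕ) - ab.1 k * ab.2 k‖ ≤ ε (k : ℕ)}

/-!
Upper bound: for `k < m` put `λ_k = t_m s_m / (t_k s_k) ∈ (0, 1]` and split
`x_k y_k − (1 − λ_k) a_k b_k = (1 − λ_k)(x_k y_k − a_k b_k) + λ_k x_k y_k`. With `x = Th`, `y = Sg`
one has `λ_k |x_k y_k| = t_m s_m |h_k g_k|` for `k < m` and, by monotonicity,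
`|x_k y_k| ≤ t_m s_m |h_k g_k|` for `k ≥ m`. So the error of `Ψ*_m` is at most
`∑_{k<m} ε_k (1 − λ_k) + t_m s_m ∑ |h_k g_k|`, and `∑ |h_k g_k| ≤ 1` by Hölder.

Lower bound: with `δ = 1 − ∑_{k<m} ε_k / (t_k s_k) ≥ 0`, let `w_k = ε_k / (t_k s_k)` for `k < m`,
`w_m = δ` and `w_k = 0` beyond. Since `∑ w_k = 1`, the sequences `x_k = t_k w_k^{1/p}` and
`y_k = s_k w_k^{1/q}` lie in the classes, and `x_k y_k = t_k s_k w_k` (`extremalProd`). The choice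
of `m` makes `|x_k y_k| ≤ ε_k` for `k < n`, so `(x, y)` and `(x, −y)` are both consistent with the
information `a = b = 0`, while their scalar products are `±(t_m s_m + ∑_{k<m} ε_k (1 − λ_k))`.
-/

open Finset

lemma sum_norm_rpow_le_one_of_lqNorm_le_one {r : ℝ} (hr : 0 < r) {h : ℕ → ℂ}
    (hh : lqNorm r h ≤ 1) (S : Finset ℕ) : ∑ k ∈ S, ‖h k‖ ^ r ≤ 1 := by
  have htsum : ∑' k, (‖h k‖₊ : ℝ≥0∞) ^ r ≤ 1 := by
    simpa [lqNorm, ← ENNReal.rpow_mul, inv_mul_cancel₀ hr.ne'] using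
      ENNReal.rpow_le_rpow hh hr.le
  rw [← ENNReal.ofReal_le_one, ENNReal.ofReal_sum_of_nonneg fun k _ => by positivity]
  refine le_trans (le_of_eq (sum_congr rfl fun k _ => ?_)) ((ENNReal.sum_le_tsum S).trans htsum)
  rw [← ENNReal.ofReal_rpow_of_nonneg (norm_nonneg _) hr.le, ofReal_norm, enorm_eq_nnnorm]

lemma summable_and_tsum_norm_mul_le_one {p q : ℝ} (hpq : p.HolderConjugate q) {h g : ℕ → ℂ}
    (hh : lqNorm p h ≤ 1) (hg : lqNorm q g ≤ 1) :
    Summable (fun k => ‖h k‖ * ‖g k‖) ∧ ∑' k, ‖h k‖ * ‖g k‖ ≤ 1 := by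
  have hfin (S : Finset ℕ) : ∑ k ∈ S, ‖h k‖ * ‖g k‖ ≤ 1 := by
    have hp := Real.rpow_le_one (by positivity)
      (sum_norm_rpow_le_one_of_lqNorm_le_one hpq.pos hh S) (one_div_pos.2 hpq.pos).le
    have hq := Real.rpow_le_one (by positivity)
      (sum_norm_rpow_le_one_of_lqNorm_le_one hpq.symm.pos hg S) (one_div_pos.2 hpq.symm.pos).le
    calc ∑ k ∈ S, ‖h k‖ * ‖g k‖
        ≤ (∑ k ∈ S, ‖h k‖ ^ p) ^ (1 / p) * (∑ k ∈ S, ‖g k‖ ^ q) ^ (1 / q) :=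
          Real.inner_le_Lp_mul_Lq_of_nonneg S hpq (fun _ _ => norm_nonneg _)
            fun _ _ => norm_nonneg _
      _ ≤ 1 := mul_le_one₀ hp (by positivity) hq
  have hnonneg : 0 ≤ fun k => ‖h k‖ * ‖g k‖ := fun k => by positivity
  exact ⟨summable_of_sum_le hnonneg hfin, Real.tsum_le_of_sum_le hnonneg hfin⟩

lemma sum_fin_ite_lt_eq_sum_range {M : Type*} [AddCommMonoid M] {m n : ℕ} (hmn : m ≤ n)
    (f : ℕ → M) : ∑ k : Fin n, (if (k : ℕ) < m then f k else 0) = ∑ k ∈ range m, f k := by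
  rw [Fin.sum_univ_eq_sum_range (fun k => if k < m then f k else 0), ← sum_filter]
  congr 1
  ext k
  simp only [mem_filter, mem_range]
  omega

lemma norm_sub_mul_one_sub_le {u b : ℂ} {l : ℝ} (hl0 : 0 ≤ l) (hl1 : l ≤ 1) :
    ‖u - b * ((1 - l : ℝ) : ℂ)‖ ≤ ‖u - b‖ * (1 - l) + l * ‖u‖ := by
  calc ‖u - b * ((1 - l : ℝ) : ℂ)‖ = ‖(u - b) * ((1 - l : ℝ) : ℂ) + (l : ℂ) * u‖ := by
        congr 1; push_cast; ring
    _ ≤ _ := by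
        grw [norm_add_le, norm_mul, norm_mul, Complex.norm_real, Complex.norm_real,
          Real.norm_of_nonneg (sub_nonneg.2 hl1), Real.norm_of_nonneg hl0]

section UpperBound

variable {t s : ℕ → ℝ}

lemma antitone_mul_of_nonneg (htmono : Antitone t) (hsmono : Antitone s) (ht : ∀ k, 0 ≤ t k)
    (hs : ∀ k, 0 ≤ s k) : Antitone fun k => t k * s k := fun _ _ hjk =>
  mul_le_mul (htmono hjk) (hsmono hjk) (hs _) (ht _)

lemma norm_coord_sub_PsiStar_le (hts : ∀ k, 0 < t k * s k)
    (htsmono : Antitone fun k => t k * s k) {m k : ℕ} {u b : ℂ} {a e : ℝ}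
    (hua : ‖u‖ = t k * s k * a) (ha : 0 ≤ a) (hub : ‖u - b‖ ≤ e) :
    ‖u - if k < m then b * ((1 - t m * s m / (t k * s k) : ℝ) : ℂ) else 0‖ ≤
      (if k < m then e * (1 - t m * s m / (t k * s k)) else 0) + t m * s m * a := by
  split_ifs with hkm
  · have hl : t m * s m / (t k * s k) ≤ 1 := (div_le_one (hts k)).2 (htsmono hkm.le)
    calc _ ≤ ‖u - b‖ * (1 - t m * s m / (t k * s k)) + t m * s m / (t k * s k) * ‖u‖ :=
          norm_sub_mul_one_sub_le (div_nonneg (hts m).le (hts k).le) hl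
      _ = ‖u - b‖ * (1 - t m * s m / (t k * s k)) + t m * s m * a := by
          rw [hua, ← mul_assoc, div_mul_cancel₀ _ (hts k).ne']
      _ ≤ _ := by gcongr
  · rw [sub_zero, zero_add, hua]
    exact mul_le_mul_of_nonneg_right (htsmono (not_lt.1 hkm)) ha

lemma norm_tsum_sub_PsiStar_le (hts : ∀ k, 0 < t k * s k)
    (htsmono : Antitone fun k => t k * s k) {n m : ℕ} (hmn : m ≤ n) {ε a : ℕ → ℝ}
    {u : ℕ → ℂ} (ha0 : ∀ k, 0 ≤ a k) (ha : Summable a) (ha1 : ∑' k, a k ≤ 1)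
    (hua : ∀ k, ‖u k‖ = t k * s k * a k) {ab : (Fin n → ℂ) × (Fin n → ℂ)}
    (hab : ∀ k : Fin n, ‖u k - ab.1 k * ab.2 k‖ ≤ ε k) :
    ‖∑' k, u k - PsiStar t s n m ab‖ ≤
      t m * s m + ∑ k ∈ range m, ε k * (1 - t m * s m / (t k * s k)) := by
  set c := t m * s m
  have hu : Summable fun k => ‖u k‖ := by
    refine (ha.mul_left (t 0 * s 0)).of_nonneg_of_le (fun k => norm_nonneg _) fun k => ?_
    rw [hua]
    exact mul_le_mul_of_nonneg_right (htsmono k.zero_le) (ha0 k)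
  have hu_tail : Summable fun k => ‖u (k + n)‖ := (summable_nat_add_iff n).2 hu
  have ha_tail : Summable fun k => a (k + n) := (summable_nat_add_iff n).2 ha
  have htail k : ‖u (k + n)‖ ≤ c * a (k + n) := by
    rw [hua]
    exact mul_le_mul_of_nonneg_right (htsmono (by omega)) (ha0 _)
  have hsplit : ∑' k, u k - PsiStar t s n m ab =
      ∑ k : Fin n, (u k - if (k : ℕ) < m then
        ab.1 k * ab.2 k * ((1 - c / (t k * s k) : ℝ) : ℂ) else 0) + ∑' k, u (k + n) := by
    rw [← hu.of_norm.sum_add_tsum_nat_add n, ← Fin.sum_univ_eq_sum_range u, PsiStar,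
      sum_sub_distrib]
    ring
  calc ‖∑' k, u k - PsiStar t s n m ab‖
      ≤ ∑ k : Fin n, ((if (k : ℕ) < m then ε k * (1 - c / (t k * s k)) else 0) + c * a k) +
          ∑' k, c * a (k + n) := by
        rw [hsplit]
        refine norm_add_le_of_le ((norm_sum_le _ _).trans (sum_le_sum fun k _ =>
          norm_coord_sub_PsiStar_le hts htsmono (hua k) (ha0 k) (hab k))) ?_
        exact (norm_tsum_le_tsum_norm hu_tail).trans
          (hu_tail.tsum_le_tsum htail (ha_tail.mul_left c))
    _ = ∑ k ∈ range m, ε k * (1 - c / (t k * s k)) + c * ∑' k, a k := by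
        rw [sum_add_distrib, sum_fin_ite_lt_eq_sum_range hmn fun k => ε k * (1 - c / (t k * s k)),
          ← mul_sum, tsum_mul_left, add_assoc, ← mul_add, Fin.sum_univ_eq_sum_range a,
          ha.sum_add_tsum_nat_add]
    _ ≤ c + ∑ k ∈ range m, ε k * (1 - c / (t k * s k)) := by
        linarith [mul_le_of_le_one_right (hts m).le ha1]

lemma norm_scalarProd_sub_PsiStar_le {p q : ℝ} (hpq : p.HolderConjugate q)
    (htpos : ∀ k, 0 < t k) (htmono : Antitone t) (hspos : ∀ k, 0 < s k) (hsmono : Antitone s)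
    {n m : ℕ} (hmn : m ≤ n) {ε : ℕ → ℝ} {x y : ℕ → ℂ} (hx : x ∈ WT p t) (hy : y ∈ WT q s)
    {ab : (Fin n → ℂ) × (Fin n → ℂ)} (hab : ab ∈ infoProdCoord n ε x y) :
    ‖scalarProd x y - PsiStar t s n m ab‖ ≤
      t m * s m + ∑ k ∈ range m, ε k * (1 - t m * s m / (t k * s k)) := by
  obtain ⟨h, hxh, hh⟩ := hx
  obtain ⟨g, hyg, hg⟩ := hy
  obtain ⟨ha, ha1⟩ := summable_and_tsum_norm_mul_le_one hpq hh hg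
  refine norm_tsum_sub_PsiStar_le (fun k => mul_pos (htpos k) (hspos k))
    (antitone_mul_of_nonneg htmono hsmono (fun k => (htpos k).le) fun k => (hspos k).le) hmn
    (fun k => by positivity) ha ha1 (fun k => ?_) hab
  simp only [hxh, hyg, norm_mul, Complex.norm_real, Real.norm_of_nonneg (htpos k).le,
    Real.norm_of_nonneg (hspos k).le]
  ring

end UpperBound

lemma lqNorm_rpow_one_div_le_one {r : ℝ} (hr : 0 < r) {w : ℕ → ℝ} (hw : ∀ k, 0 ≤ w k)
    (hws : Summable w) (hw1 : ∑' k, w k ≤ 1) :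
    lqNorm r (fun k => ((w k ^ (1 / r) : ℝ) : ℂ)) ≤ 1 := by
  have hterm k : (‖((w k ^ (1 / r) : ℝ) : ℂ)‖₊ : ℝ≥0∞) ^ r = ENNReal.ofReal (w k) := by
    rw [← enorm_eq_nnnorm, ← ofReal_norm, Complex.norm_real,
      Real.norm_of_nonneg (Real.rpow_nonneg (hw k) _),
      ENNReal.ofReal_rpow_of_nonneg (Real.rpow_nonneg (hw k) _) hr.le, ← Real.rpow_mul (hw k),
      one_div_mul_cancel hr.ne', Real.rpow_one]
  rw [lqNorm, tsum_congr hterm, ← ENNReal.ofReal_tsum_of_nonneg hw hws]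
  exact ENNReal.rpow_le_one (ENNReal.ofReal_le_one.2 hw1) (one_div_pos.2 hr).le

lemma exists_mem_WT_mul_eq {p q : ℝ} (hpq : p.HolderConjugate q) (t s : ℕ → ℝ) {w : ℕ → ℝ}
    (hw : ∀ k, 0 ≤ w k) (hws : Summable w) (hw1 : ∑' k, w k ≤ 1) :
    ∃ x ∈ WT p t, ∃ y ∈ WT q s, ∀ k, x k * y k = ((t k * s k * w k : ℝ) : ℂ) := by
  refine ⟨fun k => t k * ((w k ^ (1 / p) : ℝ) : ℂ),
    ⟨_, fun k => rfl, lqNorm_rpow_one_div_le_one hpq.pos hw hws hw1⟩,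
    fun k => s k * ((w k ^ (1 / q) : ℝ) : ℂ),
    ⟨_, fun k => rfl, lqNorm_rpow_one_div_le_one hpq.symm.pos hw hws hw1⟩, fun k => ?_⟩
  have hsplit : w k ^ (1 / p) * w k ^ (1 / q) = w k := by
    rw [← Real.rpow_add' (hw k) (by simp [hpq.inv_add_inv_eq_one]), one_div, one_div,
      hpq.inv_add_inv_eq_one, Real.rpow_one]
  calc _ = ((t k * s k * (w k ^ (1 / p) * w k ^ (1 / q)) : ℝ) : ℂ) := by push_cast; ring
    _ = _ := by rw [hsplit]

lemma neg_mem_WT_s13 {q : ℝ} {s : ℕ → ℝ} {y : ℕ → ℂ} (hy : y ∈ WT q s) : -y ∈ WT q s := by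
  obtain ⟨g, hyg, hg⟩ := hy
  exact ⟨-g, fun k => by simp [hyg], by simpa [lqNorm] using hg⟩

lemma scalarProd_neg_right (x y : ℕ → ℂ) : scalarProd x (-y) = -scalarProd x y := by
  simp [scalarProd, tsum_neg]

section Errors

variable {Z : Type*} {W₁ W₂ : Set (ℕ → ℂ)} {J : (ℕ → ℂ) → (ℕ → ℂ) → Set Z}

lemma enorm_sub_le_recErrSP (Ψ : Z → ℂ) {x y : ℕ → ℂ} {z : Z} (hx : x ∈ W₁) (hy : y ∈ W₂)
    (hz : z ∈ J x y) : ‖scalarProd x y - Ψ z‖ₑ ≤ recErrSP W₁ W₂ J Ψ :=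
  le_iSup₂_of_le x hx <| le_iSup₂_of_le y hy <| le_iSup₂_of_le z hz le_rfl

lemma recErrSP_le_ofReal {Ψ : Z → ℂ} {V : ℝ}
    (h : ∀ x ∈ W₁, ∀ y ∈ W₂, ∀ z ∈ J x y, ‖scalarProd x y - Ψ z‖ ≤ V) :
    recErrSP W₁ W₂ J Ψ ≤ ENNReal.ofReal V :=
  iSup₂_le fun x hx => iSup₂_le fun y hy => iSup₂_le fun z hz => by
    rw [← enorm_eq_nnnorm, ← ofReal_norm]
    exact ENNReal.ofReal_le_ofReal (h x hx y hy z hz)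

lemma enorm_scalarProd_le_recErrSP (Ψ : Z → ℂ) {x y : ℕ → ℂ} {z : Z} (hx : x ∈ W₁)
    (hy : y ∈ W₂) (hy' : -y ∈ W₂) (hz : z ∈ J x y) (hz' : z ∈ J x (-y)) :
    ‖scalarProd x y‖ₑ ≤ recErrSP W₁ W₂ J Ψ := by
  have h2 : 2 * ‖scalarProd x y‖ₑ ≤ 2 * recErrSP W₁ W₂ J Ψ :=
    calc 2 * ‖scalarProd x y‖ₑ = ‖(scalarProd x y - Ψ z) - (scalarProd x (-y) - Ψ z)‖ₑ := by
          rw [scalarProd_neg_right, sub_sub_sub_cancel_right, sub_neg_eq_add, ← two_mul,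
            enorm_mul]
          congr 1
          simp [← ofReal_norm]
      _ ≤ ‖scalarProd x y - Ψ z‖ₑ + ‖scalarProd x (-y) - Ψ z‖ₑ := enorm_sub_le
      _ ≤ 2 * recErrSP W₁ W₂ J Ψ := by
          rw [two_mul]
          exact add_le_add (enorm_sub_le_recErrSP Ψ hx hy hz) (enorm_sub_le_recErrSP Ψ hx hy' hz')
  exact (ENNReal.mul_le_mul_iff_right two_ne_zero ENNReal.ofNat_ne_top).1 h2

end Errors

noncomputable def extremalProd (t s ε : ℕ → ℝ) (m k : ℕ) : ℝ :=
  if k < m then ε k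
  else if k = m then t m * s m * (1 - ∑ j ∈ range m, ε j / (t j * s j)) else 0

section LowerBound

variable {t s ε : ℕ → ℝ} {m : ℕ}

lemma extremalProd_of_notMem_range {k : ℕ} (hk : k ∉ range (m + 1)) :
    extremalProd t s ε m k = 0 := by
  rw [mem_range] at hk
  rw [extremalProd, if_neg (by omega), if_neg (by omega)]

lemma extremalProd_nonneg (hts : ∀ k, 0 < t k * s k)
    (hε : ∀ k, k < m → 0 ≤ ε k) (hδ : 0 ≤ 1 - ∑ k ∈ range m, ε k / (t k * s k)) (k : ℕ) :
    0 ≤ extremalProd t s ε m k := by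
  unfold extremalProd
  split_ifs with hkm
  exacts [hε k hkm, mul_nonneg (hts m).le hδ, le_rfl]

lemma sum_range_succ_extremalProd (t s ε : ℕ → ℝ) (m : ℕ) :
    ∑ k ∈ range (m + 1), extremalProd t s ε m k =
      t m * s m + ∑ k ∈ range m, ε k * (1 - t m * s m / (t k * s k)) := by
  rw [sum_range_succ, sum_congr rfl fun k hk => by rw [extremalProd, if_pos (mem_range.1 hk)],
    extremalProd, if_neg (lt_irrefl m), if_pos rfl]
  simp only [mul_sub, mul_one, sum_sub_distrib, mul_sum]
  rw [sum_congr rfl fun k _ => mul_div_left_comm (ε k) _ _]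
  ring

lemma hasSum_extremalProd_div (hts : ∀ k, 0 < t k * s k) :
    HasSum (fun k => extremalProd t s ε m k / (t k * s k)) 1 := by
  have hsum : ∑ k ∈ range (m + 1), extremalProd t s ε m k / (t k * s k) = 1 := by
    rw [sum_range_succ, sum_congr rfl fun k hk => by rw [extremalProd, if_pos (mem_range.1 hk)],
      extremalProd, if_neg (lt_irrefl m), if_pos rfl,
      mul_div_cancel_left₀ _ (hts m).ne']
    ring
  exact hsum ▸ hasSum_sum_of_ne_finset_zero fun k hk => by
    rw [extremalProd_of_notMem_range hk, zero_div]

lemma ofReal_le_recErrSP {p q : ℝ} (hpq : p.HolderConjugate q)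
    (hts : ∀ k, 0 < t k * s k) {n : ℕ} (hmn : m ≤ n)
    (hε : ∀ k, k < n → 0 ≤ ε k) (hδ : 0 ≤ 1 - ∑ k ∈ range m, ε k / (t k * s k))
    (hδm : m < n → t m * s m * (1 - ∑ k ∈ range m, ε k / (t k * s k)) ≤ ε m)
    (Ψ : (Fin n → ℂ) × (Fin n → ℂ) → ℂ) :
    ENNReal.ofReal (t m * s m + ∑ k ∈ range m, ε k * (1 - t m * s m / (t k * s k))) ≤
      recErrSP (WT p t) (WT q s) (infoProdCoord n ε) Ψ := by
  have hz0 := extremalProd_nonneg hts (fun k hk => hε k (by omega)) hδ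
  have hzε (k : ℕ) (hk : k < n) : extremalProd t s ε m k ≤ ε k := by
    unfold extremalProd
    split_ifs with hkm hkm'
    exacts [le_rfl, hkm' ▸ hδm (hkm' ▸ hk), hε k hk]
  have hw := hasSum_extremalProd_div (ε := ε) (m := m) hts
  obtain ⟨x, hx, y, hy, hxy⟩ := exists_mem_WT_mul_eq hpq t s
    (fun k => div_nonneg (hz0 k) (hts k).le) hw.summable hw.tsum_eq.le
  have hxy' k : x k * y k = extremalProd t s ε m k := by rw [hxy, mul_div_cancel₀ _ (hts k).ne']
  have hA : scalarProd x y = ((∑ k ∈ range (m + 1), extremalProd t s ε m k : ℝ) : ℂ) := by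
    rw [scalarProd, tsum_eq_sum fun k hk => by
      rw [hxy', extremalProd_of_notMem_range hk, Complex.ofReal_zero]]
    push_cast [hxy']
    rfl
  have hinfo : ((0, 0) : (Fin n → ℂ) × (Fin n → ℂ)) ∈ infoProdCoord n ε x y := fun k => by
    simpa [hxy', abs_of_nonneg (hz0 k)] using hzε k k.isLt
  have hinfo' : ((0, 0) : (Fin n → ℂ) × (Fin n → ℂ)) ∈ infoProdCoord n ε x (-y) := fun k => by
    simpa [hxy', abs_of_nonneg (hz0 k)] using hzε k k.isLt
  calc _ = ‖scalarProd x y‖ₑ := by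
        rw [← sum_range_succ_extremalProd, hA, ← ofReal_norm, Complex.norm_real,
          Real.norm_of_nonneg (sum_nonneg fun k _ => hz0 k)]
    _ ≤ _ := enorm_scalarProd_le_recErrSP Ψ hx hy (neg_mem_WT_s13 hy) hinfo hinfo'

end LowerBound

theorem optimal_recovery_scalar_product_coordinatewise_general
    (n : ℕ) (p q : ℝ) (hp : 1 < p) (hq : q = p / (p - 1))
    (t s : ℕ → ℝ) (htpos : ∀ k, 0 < t k) (htmono : Antitone t)
    (hspos : ∀ k, 0 < s k) (hsmono : Antitone s)
    (ε : ℕ → ℝ) (hε : ∀ k, k < n → 0 ≤ ε k) (m : ℕ)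
    (hm : (1 - ∑ k ∈ Finset.range n, ε k / (t k * s k) ≥ 0 ∧ m = n) ∨
      (m ≤ n ∧ 1 - ∑ k ∈ Finset.range m, ε k / (t k * s k) ≥ 0 ∧
        1 - ∑ k ∈ Finset.range m, ε k / (t k * s k) - ε m / (t m * s m) < 0)) :
    optErrSP (WT p t) (WT q s) (infoProdCoord n ε) =
      recErrSP (WT p t) (WT q s) (infoProdCoord n ε) (PsiStar t s n m) ∧
    recErrSP (WT p t) (WT q s) (infoProdCoord n ε) (PsiStar t s n m) =
      ENNReal.ofReal
        (t m * s m + ∑ k ∈ Finset.range m, ε k * (1 - t m * s m / (t k * s k))) := by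
  have hpq : p.HolderConjugate q := hq ▸ .conjExponent hp
  have hts k : 0 < t k * s k := mul_pos (htpos k) (hspos k)
  set δ := 1 - ∑ k ∈ range m, ε k / (t k * s k)
  obtain ⟨hmn, hδ, hδm⟩ : m ≤ n ∧ 0 ≤ δ ∧ (m < n → t m * s m * δ ≤ ε m) := by
    rcases hm with ⟨hδ, rfl⟩ | ⟨hmn, hδ, hδm⟩
    · exact ⟨le_rfl, hδ, fun h => absurd h (lt_irrefl m)⟩
    · refine ⟨hmn, hδ, fun _ => ?_⟩
      rw [← le_div_iff₀' (hts m)]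
      linarith
  have hlower := ofReal_le_recErrSP hpq hts hmn hε hδ hδm
  have hPsi : recErrSP (WT p t) (WT q s) (infoProdCoord n ε) (PsiStar t s n m) =
      ENNReal.ofReal (t m * s m + ∑ k ∈ range m, ε k * (1 - t m * s m / (t k * s k))) :=
    le_antisymm (recErrSP_le_ofReal fun x hx y hy ab hab =>
      norm_scalarProd_sub_PsiStar_le hpq htpos htmono hspos hsmono hmn hx hy hab) (hlower _)
  exact ⟨le_antisymm (iInf_le _ _) (hPsi.trans_le (le_iInf hlower)), hPsi⟩

/-- Theorem 5.1: optimal recovery of the scalar product on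
`W^{T,S}_{p,q} = W^T_p × W^S_q` from the first `n` coordinatewise products known with
coordinatewise errors `ε_k`. -/
theorem optimal_recovery_scalar_product_coordinatewise
    (n : ℕ) (hn : 1 ≤ n) (p q : ℝ) (hp : 1 < p) (hq : q = p / (p - 1))
    (t s : ℕ → ℝ) (htpos : ∀ k, 0 < t k) (htmono : Antitone t)
    (hspos : ∀ k, 0 < s k) (hsmono : Antitone s)
    (ε : ℕ → ℝ) (hε : ∀ k, k < n → 0 ≤ ε k) (m : ℕ)
    (hm : (1 - ∑ k ∈ Finset.range n, ε k / (t k * s k) ≥ 0 ∧ m = n) ∨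
      (m ≤ n ∧ 1 - ∑ k ∈ Finset.range m, ε k / (t k * s k) ≥ 0 ∧
        1 - ∑ k ∈ Finset.range m, ε k / (t k * s k) - ε m / (t m * s m) < 0)) :
    optErrSP (WT p t) (WT q s) (infoProdCoord n ε) =
      recErrSP (WT p t) (WT q s) (infoProdCoord n ε) (PsiStar t s n m) ∧
    recErrSP (WT p t) (WT q s) (infoProdCoord n ε) (PsiStar t s n m) =
      ENNReal.ofReal
        (t m * s m + ∑ k ∈ Finset.range m, ε k * (1 - t m * s m / (t k * s k))) :=
  optimal_recovery_scalar_product_coordinatewise_general n p q hp hq t s htpos htmono hspos hsmono ε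
    hε m hm
end
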